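/- arXiv:2012.07221 — 6 statements merged into one kernel-verified Lean document; each statement's English description precedes it below -/
import Mathlib

section
/- In a connected graph, any two longest paths share at least one common vertex. -/
open SimpleGraph

/-- `P` is a detour (longest path) of `G`: it is a path of maximum length among all paths. -/
def IsDetour {V : Type*} (G : SimpleGraph V) {u v : V} (P : G.Walk u v) : Prop :=
  P.IsPath ∧ ∀ ⦃x y : V⦄ (Q : G.Walk x y), Q.IsPath → Q.length ≤ P.length

section Aux

variable {V : Type*} {G : SimpleGraph V}

lemma isPath_append_aux {u v w : V} {p : G.Walk u v} {q : G.Walk v w}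
    (hp : p.IsPath) (hq : q.IsPath)
    (h : ∀ x, x ∈ p.support → x ∈ q.support → x = v) : (p.append q).IsPath := by
  have hqn : q.support.Nodup := hq.support_nodup
  have hqc := q.support_eq_cons
  rw [Walk.isPath_def, Walk.support_append]
  refine List.Nodup.append hp.support_nodup ?_ ?_
  · rw [hqc, List.nodup_cons] at hqn; exact hqn.2
  · intro x hx hx'
    have hxq : x ∈ q.support := List.mem_of_mem_tail hx'
    have hxv : x = v := h x hx hxq
    subst hxv
    rw [hqc, List.nodup_cons] at hqn
    exact hqn.1 hx'

lemma first_in_set {T : Set V} {a b : V} (W : G.Walk a b) (hb : b ∈ T) :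
    ∃ (c : V) (_ : c ∈ T) (R : G.Walk a c),
      (∀ x ∈ R.support, x ∈ T → x = c) ∧ R.support ⊆ W.support := by
  classical
  induction W with
  | nil => exact ⟨_, hb, Walk.nil, fun x hx _ => by simpa using hx, fun x hx => hx⟩
  | @cons a a' b h W ih =>
    by_cases ha : a ∈ T
    · exact ⟨a, ha, Walk.nil, fun x hx _ => by simpa using hx, by simp⟩
    · obtain ⟨c, hc, R, hR1, hR2⟩ := ih hb
      refine ⟨c, hc, Walk.cons h R, ?_, ?_⟩
      · intro x hx hxT
        rw [Walk.support_cons] at hx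
        rcases List.mem_cons.mp hx with hx1 | hx1
        · exact absurd (hx1 ▸ hxT) ha
        · exact hR1 x hx1 hxT
      · rw [Walk.support_cons, Walk.support_cons]
        exact List.cons_subset_cons a hR2

/-- Connecting path between two sets, internally avoiding both. -/
lemma connecting_path {S T : Set V} {a b : V} (W : G.Walk a b) (ha : a ∈ S) (hb : b ∈ T) :
    ∃ (u c : V) (_ : u ∈ S) (_ : c ∈ T) (R : G.Walk u c), R.IsPath ∧
      (∀ x ∈ R.support, x ∈ S → x = u) ∧ (∀ x ∈ R.support, x ∈ T → x = c) := by
  classical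
  obtain ⟨c, hc, R₁, hR1, hR1s⟩ := first_in_set W hb
  obtain ⟨u, hu, R₂, hR2, hR2s⟩ := first_in_set R₁.reverse ha
  refine ⟨u, c, hu, hc, R₂.reverse.bypass, R₂.reverse.bypass_isPath, ?_, ?_⟩
  · intro x hx hxS
    have : x ∈ R₂.support := by
      have := R₂.reverse.support_bypass_subset hx
      rwa [Walk.support_reverse, List.mem_reverse] at this
    exact hR2 x this hxS
  · intro x hx hxT
    have hx2 : x ∈ R₂.support := by
      have := R₂.reverse.support_bypass_subset hx
      rwa [Walk.support_reverse, List.mem_reverse] at this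
    have hx1 : x ∈ R₁.support := by
      have := hR2s hx2
      rwa [Walk.support_reverse, List.mem_reverse] at this
    exact hR1 x hx1 hxT

/-- From a vertex on a path, one can walk to an endpoint along the path covering at least
half its length. -/
lemma half_path {a b u : V} (P : G.Walk a b) (hP : P.IsPath) (hu : u ∈ P.support) :
    ∃ (e : V) (X : G.Walk e u), X.IsPath ∧ X.support ⊆ P.support ∧
      P.length ≤ 2 * X.length := by
  classical
  have hspec := P.take_spec hu
  have hlen : (P.takeUntil u hu).length + (P.dropUntil u hu).length = P.length := by
    have := congrArg Walk.length hspec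
    rwa [Walk.length_append] at this
  rcases le_total (P.takeUntil u hu).length (P.dropUntil u hu).length with h | h
  · refine ⟨b, (P.dropUntil u hu).reverse, (hP.dropUntil hu).reverse, ?_, ?_⟩
    · intro x hx
      rw [Walk.support_reverse, List.mem_reverse] at hx
      exact P.support_dropUntil_subset hu hx
    · rw [Walk.length_reverse]; omega
  · refine ⟨a, P.takeUntil u hu, hP.takeUntil hu, fun x hx => P.support_takeUntil_subset hu hx, ?_⟩
    omega

end Aux

/-- In a finite connected graph, any two longest paths share a common vertex. -/
theorem detours_intersect {V : Type*} [Fintype V] (G : SimpleGraph V)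
    (hG : G.Connected) {p₁ p₂ q₁ q₂ : V} (P : G.Walk p₁ p₂) (Q : G.Walk q₁ q₂)
    (hP : IsDetour G P) (hQ : IsDetour G Q) :
    ∃ w : V, w ∈ P.support ∧ w ∈ Q.support := by
  by_contra hcon
  push_neg at hcon
  -- the two detours have the same length
  have hPQ : Q.length ≤ P.length := hP.2 Q hQ.1
  have hQP : P.length ≤ Q.length := hQ.2 P hP.1
  -- a walk from p₁ to q₁
  obtain ⟨W⟩ := hG.1 p₁ q₁
  obtain ⟨u, c, hu, hc, R, hRpath, hRS, hRT⟩ :=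
    connecting_path (S := {x | x ∈ P.support}) (T := {x | x ∈ Q.support}) W
      P.start_mem_support Q.start_mem_support
  obtain ⟨e, X, hXpath, hXsub, hXlen⟩ := half_path P hP.1 hu
  obtain ⟨f, Y, hYpath, hYsub, hYlen⟩ := half_path Q hQ.1 hc
  -- glue X ++ R ++ Y.reverse into a longer path, contradiction
  have hRlen : 1 ≤ R.length := by
    rcases Nat.eq_zero_or_pos R.length with h0 | h0
    · exact absurd ((R.eq_of_length_eq_zero h0) ▸ hc) (hcon u hu)
    · omega
  have hRY : (R.append Y.reverse).IsPath := by
    apply isPath_append_aux hRpath hYpath.reverse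
    intro x hx hx'
    rw [Walk.support_reverse, List.mem_reverse] at hx'
    exact hRT x hx (hYsub hx')
  have hZ : (X.append (R.append Y.reverse)).IsPath := by
    apply isPath_append_aux hXpath hRY
    intro x hx hx'
    rw [Walk.support_append] at hx'
    rcases List.mem_append.mp hx' with h1 | h1
    · exact hRS x h1 (hXsub hx)
    · exfalso
      have : x ∈ Y.reverse.support := List.mem_of_mem_tail h1
      rw [Walk.support_reverse, List.mem_reverse] at this
      exact hcon x (hXsub hx) (hYsub this)
  have := hP.2 _ hZ
  rw [Walk.length_append, Walk.length_append, Walk.length_reverse] at this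
  omega
end

section
/- Every chordal graph has a tree decomposition of minimum width in which every bag induces a clique. -/
open SimpleGraph

/-- `G` is chordal: every cycle of length at least 4 has a chord, i.e. an edge of `G`
joining two vertices of the cycle that is not an edge of the cycle. -/
def IsChordal {V : Type*} (G : SimpleGraph V) : Prop :=
  ∀ ⦃u : V⦄ (c : G.Walk u u), c.IsCycle → 4 ≤ c.length →
    ∃ x y : V, x ∈ c.support ∧ y ∈ c.support ∧ G.Adj x y ∧ s(x, y) ∉ c.edges

/-- A (finite) tree decomposition of `G`. -/
structure TreeDecomp {V : Type*} (G : SimpleGraph V) where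
  ι : Type
  fin : Fintype ι
  T : SimpleGraph ι
  conn : T.Connected
  acyclic : T.IsAcyclic
  bag : ι → Finset V
  coversV : ∀ v : V, ∃ i : ι, v ∈ bag i
  coversE : ∀ ⦃u w : V⦄, G.Adj u w → ∃ i : ι, u ∈ bag i ∧ w ∈ bag i
  subtree : ∀ (v : V) ⦃i j : ι⦄ (p : T.Walk i j), p.IsPath →
      v ∈ bag i → v ∈ bag j → ∀ k ∈ p.support, v ∈ bag k

/-- The width of a tree decomposition: maximum bag size minus one. -/
noncomputable def TreeDecomp.width {V : Type*} {G : SimpleGraph V} (D : TreeDecomp G) : ℕ :=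
  (@Finset.univ D.ι D.fin).sup (fun i => (D.bag i).card) - 1

/-- The treewidth of `G`: the minimum width over all tree decompositions. -/
noncomputable def treewidth {V : Type*} (G : SimpleGraph V) : ℕ :=
  sInf {w : ℕ | ∃ D : TreeDecomp G, D.width = w}

/-!
A tree decomposition all of whose bags are cliques has minimum width: by the Helly property of
subtrees of a tree, every clique of `G` lies inside a single bag of any tree decomposition.

A finite chordal graph has such a decomposition. By Dirac's argument, every set of vertices not
inside a given clique contains a simplicial vertex outside it: for nonadjacent `a`, `b`, let `C`
be the component of `b` off the closed neighbourhood of `a` and `S` the set of other vertices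
adjacent to `C`; chordality makes `S` a clique, and induction on both sides of `S` gives two
nonadjacent simplicial vertices. Repeatedly removing simplicial vertices yields an order
`e 0, e 1, …` in which the later neighbours of each `e k` form a clique. The bags
`{e k} ∪ (later neighbours of e k)`, each attached to the bag of the first later neighbour,
form the required tree decomposition.
-/

namespace SimpleGraph

variable {V : Type*} {G : SimpleGraph V}

namespace Walk

theorem IsPath.append {u v w : V} {p : G.Walk u v} {q : G.Walk v w} (hp : p.IsPath)
    (hq : q.IsPath) (h : ∀ z ∈ p.support, z ∈ q.support → z = v) : (p.append q).IsPath := by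
  refine IsPath.mk' ?_
  rw [support_append]
  refine hp.support_nodup.append hq.support_nodup.tail fun z hzp hzq => ?_
  have hq' := hq.support_nodup
  rw [← cons_tail_support] at hq'
  exact (List.nodup_cons.mp hq').1 (h z hzp (List.mem_of_mem_tail hzq) ▸ hzq)

theorem exists_length_lt_of_isChord {x y u w : V} {p : G.Walk x y} (hc : p.IsChord s(u, w)) :
    ∃ q : G.Walk x y, q.length < p.length ∧ q.support ⊆ p.support := by
  obtain ⟨hadj, hne, hu, hw⟩ := isChord_sym2Mk.mp hc
  obtain ⟨i, rfl, hi⟩ := mem_support_iff_exists_getVert.mp hu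
  obtain ⟨j, rfl, hj⟩ := mem_support_iff_exists_getVert.mp hw
  clear hc hu hw
  wlog hij : i < j generalizing i j
  · have hji : j < i := (not_lt.mp hij).lt_of_ne fun h => hadj.ne (h ▸ rfl)
    exact this j hj i hi hadj.symm (by rwa [Sym2.eq_swap]) hji
  have hij2 : i + 1 < j := by
    refine (Nat.succ_le_of_lt hij).lt_of_ne fun h => hne ?_
    subst h
    exact p.mk_mem_edges_iff_exists.mpr ⟨i, by omega, rfl⟩
  refine ⟨(p.take i).append (cons hadj (p.drop j)), ?_, fun z hz => ?_⟩
  · simp only [length_append, length_cons, take_length, drop_length]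
    omega
  · rcases (mem_support_append_iff _ _).mp hz with hz | hz
    · exact (p.isSubwalk_take i).support_subset hz
    · rw [support_cons, List.mem_cons] at hz
      rcases hz with rfl | hz
      · exact p.getVert_mem_support _
      · exact (p.isSubwalk_drop j).support_subset hz

theorem exists_isPath_isChordless_support_subset {u v : V} (p : G.Walk u v) :
    ∃ q : G.Walk u v, q.IsPath ∧ q.IsChordless ∧ q.support ⊆ p.support := by
  classical
  induction hn : p.length using Nat.strong_induction_on generalizing p with
  | _ n ih =>
  by_cases hpath : p.IsPath
  · by_cases hcl : p.IsChordless
    · exact ⟨p, hpath, hcl, List.Subset.refl _⟩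
    · obtain ⟨e, he⟩ : ∃ e, p.IsChord e := by simpa [IsChordless] using hcl
      induction e using Sym2.ind
      obtain ⟨q, hlt, hsub⟩ := exists_length_lt_of_isChord he
      obtain ⟨r, hr, hrc, hrsub⟩ := ih _ (hn ▸ hlt) q rfl
      exact ⟨r, hr, hrc, fun z hz => hsub (hrsub hz)⟩
  · have hlt : p.bypass.length < p.length := (length_bypass_le_length p).lt_of_ne fun h =>
      hpath (bypass_eq_self_of_length_le_length_bypass p h.ge ▸ bypass_isPath p)
    obtain ⟨r, hr, hrc, hrsub⟩ := ih _ (hn ▸ hlt) p.bypass rfl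
    exact ⟨r, hr, hrc, fun z hz => support_bypass_subset_support p (hrsub hz)⟩

theorem exists_first_mem (S : Set V) {u v : V} (q : G.Walk u v) (hv : v ∈ S) :
    ∃ m ∈ S, ∃ w : G.Walk u m, ∀ z ∈ w.support, z ∈ S → z = m := by
  induction q with
  | nil => exact ⟨_, hv, .nil, by simp⟩
  | @cons a b c hab q ih =>
    by_cases ha : a ∈ S
    · exact ⟨a, ha, .nil, by simp⟩
    · obtain ⟨m, hm, w, hw⟩ := ih hv
      refine ⟨m, hm, .cons hab w, fun z hz hzS => ?_⟩
      rw [support_cons, List.mem_cons] at hz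
      exact hz.elim (fun h => absurd (h ▸ hzS) ha) (hw z · hzS)

end Walk

theorem Connected.exists_median (hG : G.Connected) (i j k : V) :
    ∃ m, (∃ p : G.Walk i j, p.IsPath ∧ m ∈ p.support) ∧
      (∃ p : G.Walk k i, p.IsPath ∧ m ∈ p.support) ∧
      (∃ p : G.Walk k j, p.IsPath ∧ m ∈ p.support) := by
  classical
  obtain ⟨p, hp⟩ : ∃ p : G.Walk i j, p.IsPath := ⟨_, (hG i j).some.bypass_isPath⟩
  obtain ⟨m, hm, w, hw⟩ := Walk.exists_first_mem {z | z ∈ p.support} (hG k i).some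
    p.start_mem_support
  have hmeet : ∀ z ∈ w.bypass.support, z ∈ p.support → z = m :=
    fun z hz => hw z (w.support_bypass_subset_support hz)
  refine ⟨m, ⟨p, hp, hm⟩, ⟨_, w.bypass_isPath.append (hp.takeUntil hm).reverse ?_, ?_⟩,
    ⟨_, w.bypass_isPath.append (hp.dropUntil hm) ?_, ?_⟩⟩
  · exact fun z hz hz' => hmeet z hz (p.support_takeUntil_subset_support hm (by simpa using hz'))
  · simp
  · exact fun z hz hz' => hmeet z hz (p.support_dropUntil_subset_support hm hz')
  · simp

def ReachableIn (G : SimpleGraph V) (s : Set V) (u v : V) : Prop :=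
  ∃ p : G.Walk u v, ∀ z ∈ p.support, z ∈ s

namespace ReachableIn

variable {s t : Set V} {u v w : V}

theorem refl (hu : u ∈ s) : G.ReachableIn s u u :=
  ⟨.nil, by simpa using hu⟩

theorem mono (h : G.ReachableIn s u v) (hst : s ⊆ t) : G.ReachableIn t u v :=
  let ⟨p, hp⟩ := h
  ⟨p, fun z hz => hst (hp z hz)⟩

theorem symm (h : G.ReachableIn s u v) : G.ReachableIn s v u :=
  let ⟨p, hp⟩ := h
  ⟨p.reverse, fun z hz => hp z (by simpa using hz)⟩

theorem trans (huv : G.ReachableIn s u v) (hvw : G.ReachableIn s v w) : G.ReachableIn s u w :=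
  let ⟨p, hp⟩ := huv
  let ⟨q, hq⟩ := hvw
  ⟨p.append q, fun z hz => ((Walk.mem_support_append_iff p q).mp hz).elim (hp z) (hq z)⟩

theorem concat (h : G.ReachableIn s u v) (hvw : G.Adj v w) (hw : w ∈ s) :
    G.ReachableIn s u w :=
  let ⟨p, hp⟩ := h
  ⟨p.concat hvw, fun z hz => by
    rw [Walk.support_concat, List.mem_append, List.mem_singleton] at hz
    exact hz.elim (hp z) fun h => h ▸ hw⟩

theorem reachable (h : G.ReachableIn s u v) : G.Reachable u v :=
  let ⟨p, _⟩ := h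
  ⟨p⟩

theorem mem_right (h : G.ReachableIn s u v) : v ∈ s :=
  let ⟨p, hp⟩ := h
  hp v p.end_mem_support

end ReachableIn

theorem IsAcyclic.support_subset_of_reachableIn {s : Set V} (hG : G.IsAcyclic) {u v : V}
    {p : G.Walk u v} (hp : p.IsPath) (h : G.ReachableIn s u v) : ∀ z ∈ p.support, z ∈ s := by
  classical
  obtain ⟨q, hq⟩ := h
  have : p = q.bypass :=
    congrArg Subtype.val ((hG.subsingleton_path u v).elim ⟨p, hp⟩ ⟨_, q.bypass_isPath⟩)
  exact fun z hz => hq z (q.support_bypass_subset_support (this ▸ hz))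

section Parent

variable {ι : Type*} [LinearOrder ι] {P : ι → ι}

theorem reachableIn_fromRel_parent [Finite ι] {X : Set ι} {t : ι}
    (hX : ∀ k ∈ X, k ≠ t → k < P k ∧ P k ∈ X) {k : ι} (hk : k ∈ X) :
    (fromRel fun i j => P i = j).ReachableIn X k t := by
  induction k using WellFoundedGT.induction with
  | _ k ih =>
  by_cases hkt : k = t
  · exact hkt ▸ .refl hk
  obtain ⟨hlt, hPk⟩ := hX k hk hkt
  have hadj : (fromRel fun i j => P i = j).Adj k (P k) := (fromRel_adj _ _ _).mpr ⟨hlt.ne, .inl rfl⟩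
  exact ((ReachableIn.refl hk).concat hadj hPk).trans (ih (P k) hlt hPk)

/-- Both neighbours of the least vertex of a cycle would have to be its parent. -/
theorem isAcyclic_fromRel_parent (hP : ∀ i, i ≤ P i) : (fromRel fun i j => P i = j).IsAcyclic := by
  classical
  intro u c hc
  obtain ⟨m, hm, hmin⟩ := c.support.toFinset.exists_min_image id ⟨u, by simp⟩
  rw [List.mem_toFinset] at hm
  set c' := c.rotate m hm
  have hc' : c'.IsCycle := hc.rotate hm
  have hparent : ∀ y ∈ c'.support, (fromRel fun i j => P i = j).Adj m y → y = P m := by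
    intro y hy hadj
    have hmy : m < y :=
      (hmin y (by simpa [c'] using hy)).lt_of_ne ((fromRel_adj _ _ _).mp hadj).1
    rcases ((fromRel_adj _ _ _).mp hadj).2 with h | h
    · exact h.symm
    · exact absurd (h ▸ hP y) (not_le.mpr hmy)
  exact hc'.snd_ne_penultimate <|
    (hparent _ (c'.getVert_mem_support 1) (c'.adj_snd hc'.not_nil)).trans
      (hparent _ (c'.getVert_mem_support _) (c'.adj_penultimate hc'.not_nil).symm).symm

end Parent

def IsSimplicialIn (G : SimpleGraph V) (s : Set V) (v : V) : Prop :=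
  G.IsClique (s ∩ G.neighborSet v)

theorem IsSimplicialIn.of_subset {s t : Set V} {v : V} (h : G.IsSimplicialIn t v)
    (hst : s ∩ G.neighborSet v ⊆ t) : G.IsSimplicialIn s v :=
  IsClique.subset (s := t ∩ G.neighborSet v) (fun _ hz => ⟨hst hz, hz.2⟩) h

def IsPerfectEliminationOrder (G : SimpleGraph V) {n : ℕ} (e : Fin n → V) : Prop :=
  ∀ ⦃k p q : Fin n⦄, k < p → k < q → p ≠ q → G.Adj (e k) (e p) → G.Adj (e k) (e q) →
    G.Adj (e p) (e q)

section PerfectEliminationOrder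

variable {n : ℕ}

open scoped Classical in
noncomputable def laterNbrs (G : SimpleGraph V) (e : Fin n → V) (k : Fin n) : Finset (Fin n) :=
  {p | k < p ∧ G.Adj (e k) (e p)}

open scoped Classical in
noncomputable def peoBag (G : SimpleGraph V) (e : Fin n → V) (k : Fin n) : Finset V :=
  insert (e k) ((G.laterNbrs e k).image e)

/-- The first later neighbour of `e k`, or the last position if there is none. -/
noncomputable def peoParent (G : SimpleGraph V) (e : Fin (n + 1) → V) (k : Fin (n + 1)) :
    Fin (n + 1) :=
  (insert (Fin.last n) (G.laterNbrs e k)).min' (Finset.insert_nonempty _ _)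

section Bags

variable {e : Fin n → V} {k t : Fin n}

theorem mem_laterNbrs : t ∈ G.laterNbrs e k ↔ k < t ∧ G.Adj (e k) (e t) := by
  simp [laterNbrs]

theorem mem_peoBag {z : V} : z ∈ G.peoBag e k ↔ z = e k ∨ ∃ p ∈ G.laterNbrs e k, e p = z := by
  simp [peoBag]

theorem mem_peoBag_self : e k ∈ G.peoBag e k :=
  mem_peoBag.mpr (.inl rfl)

theorem mem_peoBag_of_lt (hkt : k < t) (hadj : G.Adj (e k) (e t)) : e t ∈ G.peoBag e k :=
  mem_peoBag.mpr (.inr ⟨t, mem_laterNbrs.mpr ⟨hkt, hadj⟩, rfl⟩)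

theorem IsPerfectEliminationOrder.isClique_peoBag (he : G.IsPerfectEliminationOrder e) :
    G.IsClique (G.peoBag e k : Set V) := by
  classical
  rw [peoBag, Finset.coe_insert, isClique_insert, Finset.coe_image]
  constructor
  · rintro _ ⟨p, hp, rfl⟩ _ ⟨q, hq, rfl⟩ hpq
    rw [Finset.mem_coe, mem_laterNbrs] at hp hq
    exact he hp.1 hq.1 (fun h => hpq (h ▸ rfl)) hp.2 hq.2
  · rintro _ ⟨p, hp, rfl⟩ -
    exact (mem_laterNbrs.mp hp).2

end Bags

variable {e : Fin (n + 1) → V} {k t : Fin (n + 1)}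

theorem lt_peoParent (hk : k ≠ Fin.last n) : k < G.peoParent e k := by
  refine Finset.lt_min'_iff _ _ |>.mpr fun p hp => ?_
  rcases Finset.mem_insert.mp hp with rfl | hp
  exacts [Fin.lt_last_iff_ne_last.mpr hk, (mem_laterNbrs.mp hp).1]

theorem le_peoParent : k ≤ G.peoParent e k := by
  refine Finset.le_min' _ _ _ fun p hp => ?_
  rcases Finset.mem_insert.mp hp with rfl | hp
  exacts [Fin.le_last k, (mem_laterNbrs.mp hp).1.le]

theorem IsPerfectEliminationOrder.mem_peoBag_peoParent (he : G.IsPerfectEliminationOrder e)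
    (hinj : Function.Injective e) (ht : e t ∈ G.peoBag e k) (hkt : k ≠ t) :
    k < G.peoParent e k ∧ e t ∈ G.peoBag e (G.peoParent e k) := by
  obtain ⟨p, hp, hpt⟩ := (mem_peoBag.mp ht).resolve_left fun h => hkt (hinj h).symm
  obtain rfl := hinj hpt
  obtain ⟨hkp, hadjp⟩ := mem_laterNbrs.mp hp
  refine ⟨lt_peoParent (hkp.trans_le (Fin.le_last p)).ne, ?_⟩
  rcases (Finset.min'_le _ _ (Finset.mem_insert_of_mem hp)).lt_or_eq with hlt | heq
  · have hP : G.peoParent e k ∈ G.laterNbrs e k :=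
      (Finset.mem_insert.mp (Finset.min'_mem _ _)).resolve_left (hlt.trans_le (Fin.le_last p)).ne
    obtain ⟨hkP, hadjP⟩ := mem_laterNbrs.mp hP
    exact mem_peoBag_of_lt hlt (he hkP hkp hlt.ne hadjP hadjp)
  · exact heq ▸ mem_peoBag_self

end PerfectEliminationOrder

theorem IsPerfectEliminationOrder.exists_treeDecomp_isClique_bag {n : ℕ} {e : Fin (n + 1) ≃ V}
    (he : G.IsPerfectEliminationOrder e) :
    ∃ D : TreeDecomp G, ∀ i, G.IsClique (D.bag i : Set V) := by
  set T := fromRel fun i j => G.peoParent e i = j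
  have hacyc : T.IsAcyclic := isAcyclic_fromRel_parent fun _ => le_peoParent
  refine ⟨⟨Fin (n + 1), inferInstance, T, ?conn, hacyc, G.peoBag e, ?coversV, ?coversE, ?subtree⟩,
    fun _ => he.isClique_peoBag⟩
  case conn =>
    refine (connected_iff_exists_forall_reachable T).mpr ⟨Fin.last n, fun k => ?_⟩
    exact (reachableIn_fromRel_parent (X := Set.univ) (fun k _ hk => ⟨lt_peoParent hk, trivial⟩)
      (Set.mem_univ k)).reachable.symm
  case coversV =>
    intro v
    obtain ⟨k, rfl⟩ := e.surjective v
    exact ⟨k, mem_peoBag_self⟩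
  case coversE =>
    intro u w huw
    obtain ⟨p, rfl⟩ := e.surjective u
    obtain ⟨q, rfl⟩ := e.surjective w
    rcases lt_or_gt_of_ne (fun h : p = q => huw.ne (h ▸ rfl)) with hpq | hqp
    · exact ⟨p, mem_peoBag_self, mem_peoBag_of_lt hpq huw⟩
    · exact ⟨q, mem_peoBag_of_lt hqp huw.symm, mem_peoBag_self⟩
  case subtree =>
    intro v i j p hp hi hj
    obtain ⟨t, rfl⟩ := e.surjective v
    have hX : ∀ k ∈ {k | e t ∈ G.peoBag e k}, k ≠ t → _ :=
      fun k hk hkt => he.mem_peoBag_peoParent e.injective hk hkt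
    exact hacyc.support_subset_of_reachableIn hp
      ((reachableIn_fromRel_parent hX hi).trans (reachableIn_fromRel_parent hX hj).symm)

end SimpleGraph

namespace TreeDecomp

variable {V : Type*} {G : SimpleGraph V} (D : TreeDecomp G)

theorem exists_subset_bag_of_isClique (W : Finset V) (hW : G.IsClique (W : Set V)) :
    ∃ i, W ⊆ D.bag i := by
  classical
  induction W using Finset.strongInduction with
  | H W ih =>
  rcases (W : Set V).subsingleton_or_nontrivial with hW1 | ⟨a, ha, b, hb, hab⟩
  · rcases W.eq_empty_or_nonempty with rfl | ⟨a, ha⟩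
    · exact ⟨D.conn.nonempty.some, Finset.empty_subset _⟩
    · obtain ⟨i, hi⟩ := D.coversV a
      exact ⟨i, fun v hv => hW1 hv ha ▸ hi⟩
  obtain ⟨i, hi⟩ := ih _ (Finset.erase_ssubset ha) (hW.subset (by simp))
  obtain ⟨j, hj⟩ := ih _ (Finset.erase_ssubset hb) (hW.subset (by simp))
  obtain ⟨k, hak, hbk⟩ := D.coversE (hW ha hb hab)
  obtain ⟨m, ⟨pij, hpij, hmij⟩, ⟨pki, hpki, hmki⟩, ⟨pkj, hpkj, hmkj⟩⟩ :=
    D.conn.exists_median i j k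
  refine ⟨m, fun v hv => ?_⟩
  by_cases hva : v = a
  · exact D.subtree v pkj hpkj (hva ▸ hak) (hj (Finset.mem_erase.mpr ⟨hva ▸ hab, hv⟩)) m hmkj
  by_cases hvb : v = b
  · exact D.subtree v pki hpki (hvb ▸ hbk) (hi (Finset.mem_erase.mpr ⟨hvb ▸ hab.symm, hv⟩)) m hmki
  · exact D.subtree v pij hpij (hi (Finset.mem_erase.mpr ⟨hva, hv⟩))
      (hj (Finset.mem_erase.mpr ⟨hvb, hv⟩)) m hmij

theorem width_le_of_isClique_bag (h : ∀ i, G.IsClique (D.bag i : Set V)) (D' : TreeDecomp G) :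
    D.width ≤ D'.width := by
  let := D.fin
  let := D'.fin
  refine Nat.sub_le_sub_right (Finset.sup_le fun i _ => ?_) 1
  obtain ⟨j, hj⟩ := D'.exists_subset_bag_of_isClique _ (h i)
  exact (Finset.card_le_card hj).trans
    (Finset.le_sup (f := fun j => (D'.bag j).card) (Finset.mem_univ j))

theorem width_eq_treewidth_of_isClique_bag (h : ∀ i, G.IsClique (D.bag i : Set V)) :
    D.width = treewidth G :=
  le_antisymm (le_csInf ⟨_, D, rfl⟩ fun _ ⟨D', hD'⟩ => hD' ▸ D.width_le_of_isClique_bag h D')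
    (Nat.sInf_le ⟨D, rfl⟩)

end TreeDecomp

section Chordal

variable {V : Type*} {G : SimpleGraph V}

/-- A chordless path from `x` to `y` through the non-neighbours of `a`, closed up through `a`,
would be a chordless cycle of length at least four. -/
theorem IsChordal.adj_of_reachableIn (hG : IsChordal G)
    {a x y : V} (hx : G.Adj a x) (hy : G.Adj a y) (hxy : x ≠ y)
    (h : G.ReachableIn ({z | z ≠ a ∧ ¬ G.Adj a z} ∪ {x, y}) x y) : G.Adj x y := by
  by_contra hnxy
  obtain ⟨p, hp⟩ := h
  obtain ⟨q, hq, hqc, hqp⟩ := p.exists_isPath_isChordless_support_subset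
  have hq_mem : ∀ z ∈ q.support, z = x ∨ z = y ∨ (z ≠ a ∧ ¬ G.Adj a z) := fun z hz => by
    simpa using hp z (hqp hz)
  have ha : a ∉ q.support := fun haq => by
    rcases hq_mem a haq with rfl | rfl | h
    exacts [hx.ne rfl, hy.ne rfl, h.1 rfl]
  have hlen : 2 ≤ q.length := by
    by_contra! hlt
    interval_cases hl : q.length
    · exact hxy (Walk.eq_of_length_eq_zero hl)
    · exact hnxy (Walk.adj_of_length_eq_one hl)
  set c := Walk.cons hx (q.concat hy.symm)
  have hc : c.IsCycle := by
    refine (Walk.cons_isCycle_iff _ hx).mpr ⟨hq.concat ha hy.symm, fun he => ?_⟩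
    rw [Walk.edges_concat, List.concat_eq_append, List.mem_append, List.mem_singleton] at he
    rcases he with he | he
    · exact ha (q.fst_mem_support_of_mem_edges he)
    · rcases Sym2.eq_iff.mp he with ⟨rfl, rfl⟩ | ⟨-, rfl⟩
      exacts [hx.ne rfl, hxy rfl]
  have hc_mem : ∀ z ∈ c.support, z = a ∨ z ∈ q.support := fun z hz => by
    simp only [c, Walk.support_cons, Walk.support_concat, List.mem_cons, List.mem_append] at hz
    tauto
  have hc_edge : ∀ z ∈ q.support, G.Adj a z → s(a, z) ∈ c.edges := fun z hz haz => by
    rcases hq_mem z hz with rfl | rfl | h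
    · simp [c]
    · simp [c, Walk.edges_concat, Sym2.eq_swap]
    · exact absurd haz h.2
  obtain ⟨z₁, z₂, hz₁, hz₂, hadj, hne⟩ :=
    hG c hc (by simp only [c, Walk.length_cons, Walk.length_concat]; omega)
  rcases hc_mem z₁ hz₁ with rfl | hq₁ <;> rcases hc_mem z₂ hz₂ with rfl | hq₂
  · exact hadj.ne rfl
  · exact hne (hc_edge z₂ hq₂ hadj)
  · exact hne (Sym2.eq_swap ▸ hc_edge z₁ hq₁ hadj.symm)
  · refine hne ?_
    simp only [c, Walk.edges_cons, Walk.edges_concat, List.concat_eq_append, List.mem_cons,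
      List.mem_append]
    exact Or.inr (Or.inl (hqc.mem_edges hq₁ hq₂ hadj))

/-- Given nonadjacent `a, b ∈ s`, take for `C` the vertices reached from `b` in `s` off the
closed neighbourhood of `a`, and for `S` the other vertices of `s` adjacent to `C`. -/
theorem IsChordal.exists_isClique_separator (hG : IsChordal G) {s : Set V} {a b : V}
    (hb : b ∈ s) (hab : a ≠ b) (hnadj : ¬ G.Adj a b) :
    ∃ C S : Set V, C ⊆ s ∧ S ⊆ s ∧ Disjoint C S ∧ b ∈ C ∧ a ∉ C ∧ a ∉ S ∧ G.IsClique S ∧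
      ∀ u ∈ s, ∀ c ∈ C, G.Adj u c → u ∈ C ∨ u ∈ S := by
  set U : Set V := {z | z ∈ s ∧ z ≠ a ∧ ¬ G.Adj a z}
  set C : Set V := {c | G.ReachableIn U b c}
  set S : Set V := {x | x ∈ s ∧ x ∉ C ∧ ∃ c ∈ C, G.Adj x c}
  have hCU : C ⊆ U := fun c hc => hc.mem_right
  have hSa : S ⊆ G.neighborSet a := by
    rintro x ⟨hxs, hxC, c, hc, hxc⟩
    by_contra hax
    have hxa : x ≠ a := by
      rintro rfl
      exact (hCU hc).2.2 hxc
    exact hxC (hc.concat hxc.symm ⟨hxs, hxa, hax⟩)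
  refine ⟨C, S, fun c hc => (hCU hc).1, fun x hx => hx.1,
    Set.disjoint_left.mpr fun c hc hcS => hcS.2.1 hc, .refl ⟨hb, hab.symm, hnadj⟩,
    fun haC => (hCU haC).2.1 rfl, fun haS => G.loopless.irrefl a (hSa haS), ?_,
    fun u hu c hc huc => or_iff_not_imp_left.mpr fun huC => ⟨hu, huC, c, hc, huc⟩⟩
  rintro x hx y hy hxy
  obtain ⟨-, -, c₁, hc₁, hxc₁⟩ := id hx
  obtain ⟨-, -, c₂, hc₂, hyc₂⟩ := id hy
  have hU : U ⊆ {z | z ≠ a ∧ ¬ G.Adj a z} ∪ {x, y} := fun z hz => .inl hz.2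
  exact hG.adj_of_reachableIn (hSa hx) (hSa hy) hxy <|
    (((ReachableIn.refl (by simp)).concat hxc₁ (hU (hCU hc₁))).trans
      ((hc₁.symm.trans hc₂).mono hU)).concat hyc₂.symm (by simp)

/-- Dirac's lemma; avoiding an arbitrary clique `K` is what lets the induction run on both sides
of a clique separator. -/
theorem IsChordal.exists_isSimplicialIn_notMem [Finite V] (hG : IsChordal G) (s : Set V)
    {K : Set V} (hK : G.IsClique K) (hsK : ¬ s ⊆ K) :
    ∃ v ∈ s, v ∉ K ∧ G.IsSimplicialIn s v := by
  induction s using WellFoundedLT.induction generalizing K with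
  | _ s ih =>
  obtain ⟨a₀, ha₀s, ha₀K⟩ := Set.not_subset.mp hsK
  by_cases hs : G.IsClique s
  · exact ⟨a₀, ha₀s, ha₀K, hs.subset Set.inter_subset_left⟩
  obtain ⟨⟨a, ha⟩, ⟨b, hb⟩, hab, hnadj⟩ := (not_isClique_iff G).mp hs
  obtain ⟨C, S, hCs, hSs, hCS, hbC, haC, haS, hS, hCnbr⟩ :=
    hG.exists_isClique_separator hb (fun h => hab (Subtype.ext h)) hnadj
  obtain ⟨u, ⟨hus, huC⟩, huS, hu⟩ := ih (s \ C)
    (ssubset_of_subset_not_subset Set.sdiff_subset fun h => (h hb).2 hbC) hS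
    fun h => haS (h ⟨ha, haC⟩)
  obtain ⟨u', hu'CS, hu'S, hu'⟩ := ih (C ∪ S)
    (ssubset_of_subset_not_subset (Set.union_subset hCs hSs) fun h => (h ha).elim haC haS) hS
    fun h => Set.disjoint_left.mp hCS hbC (h (Or.inl hbC))
  have hu'C : u' ∈ C := hu'CS.resolve_right hu'S
  have huu' : u ≠ u' := fun h => huC (h ▸ hu'C)
  have hnadj' : ¬ G.Adj u u' := fun h => (hCnbr u hus u' hu'C h).elim huC huS
  by_cases huK : u ∈ K
  · refine ⟨u', hCs hu'C, fun hu'K => hnadj' (hK huK hu'K huu'), hu'.of_subset ?_⟩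
    exact fun z ⟨hzs, hzu⟩ => hCnbr z hzs u' hu'C (G.adj_symm hzu)
  · refine ⟨u, hus, huK, hu.of_subset ?_⟩
    exact fun z ⟨hzs, hzu⟩ => ⟨hzs, fun hzC => (hCnbr u hus z hzC hzu).elim huC huS⟩

theorem IsChordal.exists_perfectEliminationOrder [Finite V] (hG : IsChordal G) (n : ℕ)
    (s : Set V) (hs : s.ncard = n) :
    ∃ e : Fin n → V, Function.Injective e ∧ Set.range e = s ∧ G.IsPerfectEliminationOrder e := by
  induction n generalizing s with
  | zero =>
    refine ⟨Fin.elim0, fun k => k.elim0, ?_, fun k => k.elim0⟩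
    rw [Set.range_eq_empty, eq_comm, ← Set.ncard_eq_zero]
    exact hs
  | succ n ih =>
    obtain ⟨v, hvs, -, hv⟩ := hG.exists_isSimplicialIn_notMem s isClique_empty fun h =>
      by simp [Set.subset_empty_iff.mp h] at hs
    obtain ⟨e, he, hrange, hpeo⟩ :=
      ih (s \ {v}) (by rw [Set.ncard_sdiff_singleton_of_mem hvs]; omega)
    refine ⟨Fin.cons v e, Fin.cons_injective_iff.mpr ⟨fun hv' => (hrange ▸ hv').2 rfl, he⟩,
      by rw [Fin.range_cons, hrange, Set.insert_sdiff_singleton, Set.insert_eq_of_mem hvs], ?_⟩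
    intro k p q hkp hkq hpq hp hq
    obtain ⟨p, rfl⟩ := Fin.exists_succ_eq.mpr (Fin.ne_zero_of_lt hkp)
    obtain ⟨q, rfl⟩ := Fin.exists_succ_eq.mpr (Fin.ne_zero_of_lt hkq)
    simp only [Fin.cons_succ] at hp hq ⊢
    cases k using Fin.cases with
    | zero =>
      have hmem : ∀ r, e r ∈ s := fun r => (hrange ▸ Set.mem_range_self r : e r ∈ s \ {v}).1
      exact hv ⟨hmem p, hp⟩ ⟨hmem q, hq⟩ fun h => hpq (by rw [he h])
    | succ k =>
      exact hpeo (Fin.succ_lt_succ_iff.mp hkp) (Fin.succ_lt_succ_iff.mp hkq)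
        (fun h => hpq (h ▸ rfl)) hp hq

theorem IsChordal.exists_treeDecomp_isClique_bag [Finite V] (hG : IsChordal G) :
    ∃ D : TreeDecomp G, ∀ i, G.IsClique (D.bag i : Set V) := by
  rcases isEmpty_or_nonempty V with hV | hV
  · exact ⟨⟨Unit, inferInstance, ⊥, .of_subsingleton, isAcyclic_bot, fun _ => ∅, isEmptyElim,
      fun u => isEmptyElim u, fun v => isEmptyElim v⟩, fun _ => by simp⟩
  obtain ⟨n, hn⟩ := Nat.exists_eq_succ_of_ne_zero (Nat.card_pos (α := V)).ne'
  obtain ⟨e, hinj, hrange, he⟩ :=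
    hG.exists_perfectEliminationOrder (n + 1) Set.univ (by rw [Set.ncard_univ, hn])
  exact IsPerfectEliminationOrder.exists_treeDecomp_isClique_bag
    (e := Equiv.ofBijective e ⟨hinj, Set.range_eq_univ.mp hrange⟩) he

end Chordal

/-- Every finite chordal graph has a tree decomposition of minimum width (= treewidth)
in which every bag induces a clique. -/
theorem chordal_treeDecomp_cliques {V : Type*} [Fintype V] (G : SimpleGraph V)
    (hG : IsChordal G) :
    ∃ D : TreeDecomp G, D.width = treewidth G ∧ ∀ i : D.ι, G.IsClique (D.bag i : Set V) := by
  obtain ⟨D, hD⟩ := hG.exists_treeDecomp_isClique_bag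
  exact ⟨D, D.width_eq_treewidth_of_isClique_bag hD, hD⟩
end

section
/- Let G be a connected chordal graph, X a clique in G, and P a longest path in G. If P has an end vertex in X, or P contains an edge with both endpoints in X, then every vertex of X lies on P. -/
open SimpleGraph

private lemma insert_vertex_aux {V : Type*} {G : SimpleGraph V} {x : V} :
    ∀ {u v a b : V} (P : G.Walk u v), P.IsPath → s(a, b) ∈ P.edges →
    G.Adj a x → G.Adj x b → x ∉ P.support →
    ∃ Q : G.Walk u v, Q.IsPath ∧ Q.length = P.length + 1 ∧
      ∀ y ∈ Q.support, y ∈ P.support ∨ y = x := by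
  intro u v a b P
  induction P with
  | nil => simp
  | @cons u w v h p ih =>
    intro hP hab hax hxb hx
    rw [Walk.cons_isPath_iff] at hP
    rw [Walk.support_cons, List.mem_cons] at hx
    push_neg at hx
    obtain ⟨hxu, hxp⟩ := hx
    rw [Walk.edges_cons, List.mem_cons] at hab
    rcases hab with hab | hab
    · rw [Sym2.eq_iff] at hab
      rcases hab with ⟨ha, hb⟩ | ⟨ha, hb⟩
      · subst ha; subst hb
        refine ⟨Walk.cons hax (Walk.cons hxb p), ?_, by simp, ?_⟩
        · rw [Walk.cons_isPath_iff, Walk.cons_isPath_iff]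
          refine ⟨⟨hP.1, hxp⟩, ?_⟩
          simp only [Walk.support_cons, List.mem_cons]
          push_neg
          exact ⟨Ne.symm hxu, hP.2⟩
        · intro y hy
          simp only [Walk.support_cons, List.mem_cons] at hy ⊢
          tauto
      · subst ha; subst hb
        refine ⟨Walk.cons hxb.symm (Walk.cons hax.symm p), ?_, by simp, ?_⟩
        · rw [Walk.cons_isPath_iff, Walk.cons_isPath_iff]
          refine ⟨⟨hP.1, hxp⟩, ?_⟩
          simp only [Walk.support_cons, List.mem_cons]
          push_neg
          exact ⟨Ne.symm hxu, hP.2⟩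
        · intro y hy
          simp only [Walk.support_cons, List.mem_cons] at hy ⊢
          tauto
    · obtain ⟨Q, hQ, hlen, hsupp⟩ := ih hP.1 hab hax hxb hxp
      refine ⟨Walk.cons h Q, ?_, by simpa using hlen, ?_⟩
      · rw [Walk.cons_isPath_iff]
        refine ⟨hQ, fun hu => ?_⟩
        rcases hsupp u hu with h1 | h1
        · exact hP.2 h1
        · exact hxu h1.symm
      · intro y hy
        simp only [Walk.support_cons, List.mem_cons] at hy ⊢
        rcases hy with hy | hy
        · tauto
        · rcases hsupp y hy with h1 | h1 <;> tauto

/-- If a longest path in a connected chordal graph has an end vertex in a clique `X`, or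
contains an edge with both endpoints in `X`, then it contains every vertex of `X`. -/
theorem detour_clique_extend {V : Type*} [Fintype V] (G : SimpleGraph V)
    (hconn : G.Connected) (hchord : IsChordal G) (X : Set V) (hX : G.IsClique X)
    {u v : V} (P : G.Walk u v) (hP : IsDetour G P)
    (h : u ∈ X ∨ v ∈ X ∨ ∃ a b : V, a ∈ X ∧ b ∈ X ∧ s(a, b) ∈ P.edges) :
    ∀ x ∈ X, x ∈ P.support := by
  intro x hx
  by_contra hxP
  rcases h with hu | hv | ⟨a, b, ha, hb, hab⟩
  · have hxu : x ≠ u := fun e => hxP (e ▸ P.start_mem_support)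
    have hadj : G.Adj x u := hX hx hu hxu
    have hQ : (Walk.cons hadj P).IsPath := by
      rw [Walk.cons_isPath_iff]; exact ⟨hP.1, hxP⟩
    have := hP.2 _ hQ
    simp at this
  · have hxv : x ≠ v := fun e => hxP (e ▸ P.end_mem_support)
    have hadj : G.Adj x v := hX hx hv hxv
    have hQ : (Walk.cons hadj P.reverse).IsPath := by
      rw [Walk.cons_isPath_iff]
      exact ⟨hP.1.reverse, by simpa using hxP⟩
    have := hP.2 _ hQ
    simp at this
  · have hax : a ≠ x := fun e => hxP (e ▸ Walk.fst_mem_support_of_mem_edges P hab)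
    have hbx : b ≠ x := fun e => hxP (e ▸ Walk.snd_mem_support_of_mem_edges P hab)
    obtain ⟨Q, hQ, hlen, _⟩ := insert_vertex_aux P hP.1 hab (hX ha hx hax) (hX hx hb hbx.symm) hxP
    have := hP.2 _ hQ
    omega
end

section
/- Let (M,X,N) be a separation of a graph G where X is a clique and a cut-set. If P and Q are longest paths in G, neither having an end vertex in X, both intersecting both M and N, and the number of end vertices of P in M equals the number of end vertices of Q in M, then P and Q share a common vertex of X. -/
open SimpleGraph Classical

/-- The graph `G` with the vertex set `X` deleted (kept as isolated vertices):
adjacency only between vertices outside `X`. -/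
def avoid {V : Type*} (G : SimpleGraph V) (X : Set V) : SimpleGraph V where
  Adj a b := G.Adj a b ∧ a ∉ X ∧ b ∉ X
  symm := ⟨fun _ _ ⟨h, ha, hb⟩ => ⟨h.symm, hb, ha⟩⟩
  loopless := ⟨fun a ⟨h, _, _⟩ => G.loopless.irrefl a h⟩

/-- `X` is a cut-set of `G`: some two vertices outside `X` are separated by deleting `X`. -/
def IsCutSet {V : Type*} (G : SimpleGraph V) (X : Set V) : Prop :=
  ∃ a b : V, a ∉ X ∧ b ∉ X ∧ ¬(avoid G X).Reachable a b

/-- A separation `(M, X, N)`: a partition of the vertices with no edge from `M` to `N`. -/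
structure IsSeparation {V : Type*} (G : SimpleGraph V) (M X N : Set V) : Prop where
  cover : M ∪ X ∪ N = Set.univ
  disjMX : Disjoint M X
  disjMN : Disjoint M N
  disjXN : Disjoint X N
  noedge : ∀ a ∈ M, ∀ b ∈ N, ¬G.Adj a b

open Classical in
/-- The number of end vertices of a path `P : G.Walk u v` lying in a set `M`. -/
noncomputable def endCount {V : Type*} (u v : V) (M : Set V) : ℕ :=
  (if u ∈ M then 1 else 0) + (if v ∈ M then 1 else 0)

/-!
Put `A = M ∪ X` and `B = N ∪ X`: every edge lies inside `A` or inside `B`, and `A ∩ B = X` is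
a clique. Along a path, the vertices lying in `A` form again a path, because an excursion of the
path outside `A` starts and ends in the clique `A ∩ B`; this path has at least as many edges as
the original path has inside `A`. If `P` and `Q` shared no vertex of `X`, the `A`-part of `P`
and the `B`-part of `Q` would be disjoint, and the condition on the ends lets us join them through
edges of `X`: directly when each path has one end in `M` and one in `N`, and by inserting the
`B`-part of `Q` into an excursion of `P` into `N` (or vice versa) when all ends lie on one side.
The result is longer than the number of `A`-edges of `P` plus the number of `B`-edges of `Q`, and
the same holds with `P` and `Q` exchanged. Every edge of a path is inside `A` or inside `B`, so
one of the two joined paths is longer than `P` or than `Q`.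
-/

namespace SimpleGraph

variable {V : Type*} {G : SimpleGraph V}

def EdgesInside (G : SimpleGraph V) (A B : Set V) : Prop :=
  ∀ ⦃a b : V⦄, G.Adj a b → (a ∈ A ∧ b ∈ A) ∨ (a ∈ B ∧ b ∈ B)

theorem EdgesInside.symm {A B : Set V} (h : G.EdgesInside A B) : G.EdgesInside B A :=
  fun _ _ hab => (h hab).symm

theorem EdgesInside.mem_of_not_mem {A B : Set V} (h : G.EdgesInside A B) {a b : V}
    (hab : G.Adj a b) (ha : a ∉ A) : a ∈ B ∧ b ∈ B :=
  (h hab).resolve_left fun h' => ha h'.1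

theorem EdgesInside.shortcut_adj {A B : Set V} (hAB : G.EdgesInside A B)
    (hclique : G.IsClique (A ∩ B)) {u w u' : V} (h : G.Adj u w) (hu : u ∈ A) (hu' : u' ∈ A)
    (hne : u ≠ u') (hw : w ∈ A → u' = w) (hw' : w ∉ A → u' ∈ B) : G.Adj u u' := by
  by_cases hwA : w ∈ A
  · exact hw hwA ▸ h
  · exact hclique ⟨hu, (hAB.mem_of_not_mem h.symm hwA).2⟩ ⟨hu', hw' hwA⟩ hne

namespace Walk

noncomputable def lengthIn (S : Set V) {u v : V} (P : G.Walk u v) : ℕ :=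
  P.darts.countP fun d => d.fst ∈ S ∧ d.snd ∈ S

variable (S : Set V)

@[simp]
theorem lengthIn_nil (u : V) : (nil : G.Walk u u).lengthIn S = 0 := by
  simp [lengthIn]

theorem lengthIn_cons {u w v : V} (h : G.Adj u w) (P : G.Walk w v) :
    (cons h P).lengthIn S = P.lengthIn S + if u ∈ S ∧ w ∈ S then 1 else 0 := by
  simp [lengthIn, List.countP_cons]

theorem lengthIn_append {u w v : V} (P : G.Walk u w) (Q : G.Walk w v) :
    (P.append Q).lengthIn S = P.lengthIn S + Q.lengthIn S := by
  simp [lengthIn, darts_append]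

@[simp]
theorem lengthIn_reverse {u v : V} (P : G.Walk u v) : P.reverse.lengthIn S = P.lengthIn S := by
  simp [lengthIn, darts_reverse, Function.comp_def, Bool.and_comm]

theorem lengthIn_eq_zero {u v : V} {P : G.Walk u v} (h : ∀ a ∈ P.support, a ∉ S) :
    P.lengthIn S = 0 :=
  List.countP_eq_zero.2 fun d hd hS =>
    h d.fst (dart_fst_mem_support_of_mem_darts P hd) (of_decide_eq_true hS).1

theorem length_le_lengthIn_add_lengthIn {A B : Set V} (hAB : G.EdgesInside A B) {u v : V}
    (P : G.Walk u v) : P.length ≤ P.lengthIn A + P.lengthIn B := by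
  rw [← length_darts,
    List.length_eq_countP_add_countP fun d => decide (d.fst ∈ A ∧ d.snd ∈ A)]
  refine Nat.add_le_add_left (List.countP_mono_left fun d _ hd => ?_) _
  simpa using (hAB d.adj).resolve_left fun h => by simp [h.1, h.2] at hd

variable {A B : Set V}

theorem IsPath.exists_shortcut_inside (hAB : G.EdgesInside A B)
    (hclique : G.IsClique (A ∩ B)) {u v : V} {P : G.Walk u v} (hP : P.IsPath)
    (hmeet : ∃ a ∈ P.support, a ∈ A) :
    ∃ (u' v' : V) (R : G.Walk u' v'), R.IsPath ∧ (∀ z ∈ R.support, z ∈ P.support ∧ z ∈ A) ∧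
      P.lengthIn A ≤ R.length ∧ (u ∈ A → u' = u) ∧ (u ∉ A → u' ∈ B) ∧ (v ∉ A → v' ∈ B) := by
  induction P with
  | nil =>
    obtain ⟨a, ha, haA⟩ := hmeet
    rw [support_nil, List.mem_singleton] at ha
    subst ha
    exact ⟨a, a, Walk.nil, .nil, by simpa using haA, by simp, fun _ => rfl, (absurd haA ·),
      (absurd haA ·)⟩
  | @cons u w v h P ih =>
    obtain ⟨hP', huP⟩ := (cons_isPath_iff h P).1 hP
    by_cases hu : u ∈ A
    · by_cases hmeet' : ∃ a ∈ P.support, a ∈ A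
      · obtain ⟨u', v', R, hR, hRP, hlen, hw, hw', hv⟩ := ih hP' hmeet'
        have hu'A := (hRP u' R.start_mem_support).2
        have hne : u ≠ u' := fun e => huP (e ▸ (hRP u' R.start_mem_support).1)
        have hadj := hAB.shortcut_adj hclique h hu hu'A hne hw hw'
        refine ⟨u, v', cons hadj R, hR.cons fun hR' => huP (hRP u hR').1, ?_, ?_,
          fun _ => rfl, (absurd hu ·), hv⟩
        · rintro z (_ | ⟨_, hz⟩)
          exacts [⟨List.mem_cons_self, hu⟩, ⟨List.mem_cons_of_mem _ (hRP z hz).1, (hRP z hz).2⟩]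
        · rw [lengthIn_cons, length_cons]
          split_ifs <;> omega
      · push Not at hmeet'
        have hw := hmeet' w P.start_mem_support
        refine ⟨u, u, Walk.nil, .nil, by simpa using hu, ?_, fun _ => rfl, (absurd hu ·),
          fun _ => (hAB.mem_of_not_mem h.symm hw).2⟩
        rw [lengthIn_cons, lengthIn_eq_zero A hmeet', if_neg fun h' => hw h'.2]
        rfl
    · have hmeet' : ∃ a ∈ P.support, a ∈ A := by
        obtain ⟨a, ha, haA⟩ := hmeet
        rw [support_cons, List.mem_cons] at ha
        exact ⟨a, ha.resolve_left fun e => hu (e ▸ haA), haA⟩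
      obtain ⟨u', v', R, hR, hRP, hlen, hw, hw', hv⟩ := ih hP' hmeet'
      have hwB := (hAB.mem_of_not_mem h hu).2
      refine ⟨u', v', R, hR, fun z hz => ⟨List.mem_cons_of_mem _ (hRP z hz).1, (hRP z hz).2⟩,
        ?_, (absurd · hu), fun _ => ?_, hv⟩
      · rwa [lengthIn_cons, if_neg fun h' => hu h'.1, add_zero]
      · by_cases hwA : w ∈ A
        · exact hw hwA ▸ hwB
        · exact hw' hwA

theorem IsPath.exists_shortcut_inside_to_inter (hAB : G.EdgesInside A B)
    (hclique : G.IsClique (A ∩ B)) {u v : V} {P : G.Walk u v} (hP : P.IsPath)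
    (hmeet : ∃ a ∈ P.support, a ∈ A) (hend : u ∉ A ∨ v ∉ A) :
    ∃ (x y : V) (R : G.Walk x y), R.IsPath ∧ (∀ z ∈ R.support, z ∈ P.support ∧ z ∈ A) ∧
      P.lengthIn A ≤ R.length ∧ y ∈ A ∩ B := by
  rcases hend with hu | hv
  · obtain ⟨x, y, R, hR, hRP, hlen, -, -, hy⟩ :=
      hP.reverse.exists_shortcut_inside hAB hclique (by simpa using hmeet)
    exact ⟨x, y, R, hR, by simpa using hRP, by simpa using hlen,
      (hRP y R.end_mem_support).2, hy hu⟩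
  · obtain ⟨x, y, R, hR, hRP, hlen, -, -, hy⟩ := hP.exists_shortcut_inside hAB hclique hmeet
    exact ⟨x, y, R, hR, hRP, hlen, (hRP y R.end_mem_support).2, hy hv⟩

end Walk

open Walk

theorem IsClique.exists_isPath_join {K : Set V} (hK : G.IsClique K) {x a c y : V}
    {R₁ : G.Walk x a} {R₂ : G.Walk c y} (h₁ : R₁.IsPath) (h₂ : R₂.IsPath) (ha : a ∈ K)
    (hc : c ∈ K) (hdisj : ∀ z ∈ R₁.support, z ∉ R₂.support) :
    ∃ R : G.Walk x y, R.IsPath ∧ R.length = R₁.length + R₂.length + 1 ∧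
      ∀ z ∈ R.support, z ∈ R₁.support ∨ z ∈ R₂.support := by
  have hadj : G.Adj a c :=
    hK ha hc fun e => hdisj a R₁.end_mem_support (e ▸ R₂.start_mem_support)
  refine ⟨R₁.append (cons hadj R₂), ?_, by simp only [length_append, length_cons]; omega,
    fun z hz => by rwa [support_append, support_cons, List.tail_cons, List.mem_append] at hz⟩
  rw [isPath_def, support_append, support_cons, List.tail_cons]
  exact h₁.support_nodup.append h₂.support_nodup hdisj

section Crossing

variable {A B : Set V} {p₁ p₂ q₁ q₂ : V} {P : G.Walk p₁ p₂} {Q : G.Walk q₁ q₂}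

theorem exists_long_path_of_ends_outside (hAB : G.EdgesInside A B)
    (hclique : G.IsClique (A ∩ B)) (hP : P.IsPath) (hQ : Q.IsPath)
    (hdisj : ∀ z ∈ A ∩ B, z ∈ P.support → z ∉ Q.support)
    (hPA : ∃ a ∈ P.support, a ∈ A) (hQB : ∃ b ∈ Q.support, b ∈ B)
    (hPend : p₁ ∉ A ∨ p₂ ∉ A) (hQend : q₁ ∉ B ∨ q₂ ∉ B) :
    ∃ (x y : V) (R : G.Walk x y), R.IsPath ∧ P.lengthIn A + Q.lengthIn B < R.length := by
  obtain ⟨x, a, R₁, hR₁, hR₁P, hlen₁, ha⟩ :=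
    hP.exists_shortcut_inside_to_inter hAB hclique hPA hPend
  obtain ⟨y, c, R₂, hR₂, hR₂Q, hlen₂, hc⟩ := hQ.exists_shortcut_inside_to_inter hAB.symm
    (Set.inter_comm A B ▸ hclique) hQB hQend
  have hdisj' : ∀ z ∈ R₁.support, z ∉ R₂.reverse.support := fun z hz₁ hz₂ => by
    rw [support_reverse, List.mem_reverse] at hz₂
    exact hdisj z ⟨(hR₁P z hz₁).2, (hR₂Q z hz₂).2⟩ (hR₁P z hz₁).1 (hR₂Q z hz₂).1
  obtain ⟨R, hR, hlen, -⟩ := hclique.exists_isPath_join hR₁ hR₂.reverse ha hc.symm hdisj'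
  exact ⟨_, _, R, hR, by rw [hlen, length_reverse]; omega⟩

theorem exists_long_path_of_excursion (hAB : G.EdgesInside A B)
    (hclique : G.IsClique (A ∩ B)) (hP : P.IsPath) (hQ : Q.IsPath)
    (hdisj : ∀ z ∈ A ∩ B, z ∈ P.support → z ∉ Q.support)
    (hp₁ : p₁ ∈ A) (hp₂ : p₂ ∈ A) (hPout : ∃ n ∈ P.support, n ∉ A)
    (hq₁ : q₁ ∉ B) (hq₂ : q₂ ∉ B) (hQB : ∃ b ∈ Q.support, b ∈ B) :
    ∃ (x y : V) (R : G.Walk x y), R.IsPath ∧ P.lengthIn A + Q.lengthIn B + 1 < R.length := by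
  obtain ⟨n, hn, hnA⟩ := hPout
  have hsplit := P.take_spec hn
  have hlenP : P.lengthIn A = (P.takeUntil n hn).lengthIn A + (P.dropUntil n hn).lengthIn A := by
    rw [← lengthIn_append, hsplit]
  have hhalves : ∀ z ∈ A, z ∈ (P.takeUntil n hn).support → z ∉ (P.dropUntil n hn).support :=
    fun z hz h₁ h₂ => (hsplit ▸ hP).ne_of_mem_support_of_append (fun e => hnA (e ▸ hz)) h₁ h₂ rfl
  obtain ⟨x, a, R₁, hR₁, hR₁P, hlen₁, -, -, ha⟩ :=
    (hP.takeUntil hn).exists_shortcut_inside hAB hclique ⟨p₁, start_mem_support _, hp₁⟩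
  obtain ⟨b, y, R₂, hR₂, hR₂P, hlen₂, -, hb, -⟩ :=
    (hP.dropUntil hn).exists_shortcut_inside hAB hclique ⟨p₂, end_mem_support _, hp₂⟩
  obtain ⟨c₁, c₂, R₃, hR₃, hR₃Q, hlen₃, -, hc₁, hc₂⟩ :=
    hQ.exists_shortcut_inside hAB.symm (Set.inter_comm A B ▸ hclique) hQB
  obtain ⟨W, hW, hWlen, hWR⟩ := hclique.exists_isPath_join hR₃ hR₂
    ⟨hc₂ hq₂, (hR₃Q c₂ R₃.end_mem_support).2⟩ ⟨(hR₂P b R₂.start_mem_support).2, hb hnA⟩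
    fun z hz₃ hz₂ => hdisj z ⟨(hR₂P z hz₂).2, (hR₃Q z hz₃).2⟩
      (support_dropUntil_subset_support _ _ (hR₂P z hz₂).1) (hR₃Q z hz₃).1
  obtain ⟨R, hR, hlen, -⟩ := hclique.exists_isPath_join hR₁ hW
    ⟨(hR₁P a R₁.end_mem_support).2, ha hnA⟩ ⟨hc₁ hq₁, (hR₃Q c₁ R₃.start_mem_support).2⟩
    fun z hz₁ hzW => (hWR z hzW).elim
      (fun hz₃ => hdisj z ⟨(hR₁P z hz₁).2, (hR₃Q z hz₃).2⟩
        (support_takeUntil_subset_support _ _ (hR₁P z hz₁).1) (hR₃Q z hz₃).1)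
      (fun hz₂ => hhalves z (hR₁P z hz₁).2 (hR₁P z hz₁).1 (hR₂P z hz₂).1)
  exact ⟨_, _, R, hR, by omega⟩

end Crossing

end SimpleGraph

namespace IsDetour

variable {V : Type*} {G : SimpleGraph V} {A B : Set V} {p₁ p₂ q₁ q₂ : V} {P : G.Walk p₁ p₂}
  {Q : G.Walk q₁ q₂}

theorem length_le_lengthIn_add_lengthIn_or (hAB : G.EdgesInside A B) (hP : IsDetour G P)
    (hQ : IsDetour G Q)
    {x₁ y₁ x₂ y₂ : V} {R₁ : G.Walk x₁ y₁} {R₂ : G.Walk x₂ y₂} (hR₁ : R₁.IsPath)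
    (hR₂ : R₂.IsPath) :
    R₁.length ≤ P.lengthIn A + Q.lengthIn B ∨ R₂.length ≤ Q.lengthIn A + P.lengthIn B := by
  have := hP.2 R₁ hR₁
  have := hQ.2 R₂ hR₂
  have := P.length_le_lengthIn_add_lengthIn hAB
  have := Q.length_le_lengthIn_add_lengthIn hAB
  omega

theorem exists_mem_inter_of_ends_outside (hAB : G.EdgesInside A B)
    (hclique : G.IsClique (A ∩ B)) (hP : IsDetour G P) (hQ : IsDetour G Q)
    (hPA : ∃ a ∈ P.support, a ∈ A) (hPB : ∃ b ∈ P.support, b ∈ B)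
    (hQA : ∃ a ∈ Q.support, a ∈ A) (hQB : ∃ b ∈ Q.support, b ∈ B)
    (hPA' : p₁ ∉ A ∨ p₂ ∉ A) (hPB' : p₁ ∉ B ∨ p₂ ∉ B)
    (hQA' : q₁ ∉ A ∨ q₂ ∉ A) (hQB' : q₁ ∉ B ∨ q₂ ∉ B) :
    ∃ z ∈ A ∩ B, z ∈ P.support ∧ z ∈ Q.support := by
  by_contra! hdisj
  obtain ⟨x₁, y₁, R₁, hR₁, hlen₁⟩ :=
    exists_long_path_of_ends_outside hAB hclique hP.1 hQ.1 hdisj hPA hQB hPA' hQB'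
  obtain ⟨x₂, y₂, R₂, hR₂, hlen₂⟩ := exists_long_path_of_ends_outside hAB hclique hQ.1 hP.1
    (fun z hz hzQ hzP => hdisj z hz hzP hzQ) hQA hPB hQA' hPB'
  have := hP.length_le_lengthIn_add_lengthIn_or hAB hQ hR₁ hR₂
  omega

theorem exists_mem_inter_of_excursion (hAB : G.EdgesInside A B)
    (hclique : G.IsClique (A ∩ B)) (hP : IsDetour G P) (hQ : IsDetour G Q)
    (hp₁ : p₁ ∈ A \ B) (hp₂ : p₂ ∈ A \ B) (hq₁ : q₁ ∈ A \ B) (hq₂ : q₂ ∈ A \ B)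
    (hPB : ∃ b ∈ P.support, b ∈ B \ A) (hQB : ∃ b ∈ Q.support, b ∈ B \ A) :
    ∃ z ∈ A ∩ B, z ∈ P.support ∧ z ∈ Q.support := by
  by_contra! hdisj
  obtain ⟨x₁, y₁, R₁, hR₁, hlen₁⟩ := exists_long_path_of_excursion hAB hclique hP.1 hQ.1 hdisj
    hp₁.1 hp₂.1 (hPB.imp fun _ h => ⟨h.1, h.2.2⟩) hq₁.2 hq₂.2 (hQB.imp fun _ h => ⟨h.1, h.2.1⟩)
  obtain ⟨x₂, y₂, R₂, hR₂, hlen₂⟩ := exists_long_path_of_excursion hAB hclique hQ.1 hP.1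
    (fun z hz hzQ hzP => hdisj z hz hzP hzQ) hq₁.1 hq₂.1 (hQB.imp fun _ h => ⟨h.1, h.2.2⟩)
    hp₁.2 hp₂.2 (hPB.imp fun _ h => ⟨h.1, h.2.1⟩)
  have := hP.length_le_lengthIn_add_lengthIn_or hAB hQ hR₁ hR₂
  omega

end IsDetour

namespace IsSeparation

variable {V : Type*} {G : SimpleGraph V} {M X N : Set V}

theorem mem_or_mem_or_mem (hsep : IsSeparation G M X N) (a : V) : a ∈ M ∨ a ∈ X ∨ a ∈ N := by
  have h : a ∈ M ∪ X ∪ N := hsep.cover ▸ Set.mem_univ a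
  simpa [or_assoc] using h

theorem edgesInside (hsep : IsSeparation G M X N) : G.EdgesInside (M ∪ X) (N ∪ X) := by
  intro a b hab
  rcases hsep.mem_or_mem_or_mem a with ha | ha | ha <;>
    rcases hsep.mem_or_mem_or_mem b with hb | hb | hb
  all_goals first
    | exact absurd hab (hsep.noedge a ha b hb)
    | exact absurd hab.symm (hsep.noedge b hb a ha)
    | simp [ha, hb]

theorem union_inter_union (hsep : IsSeparation G M X N) : (M ∪ X) ∩ (N ∪ X) = X := by
  rw [← Set.inter_union_distrib_right, hsep.disjMN.inter_eq, Set.empty_union]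

theorem mem_diff_left (hsep : IsSeparation G M X N) {a : V} (ha : a ∈ M) :
    a ∈ (M ∪ X) \ (N ∪ X) :=
  ⟨Or.inl ha, by rintro (h | h); exacts [hsep.disjMN.ne_of_mem ha h rfl,
    hsep.disjMX.ne_of_mem ha h rfl]⟩

theorem mem_diff_right (hsep : IsSeparation G M X N) {a : V} (ha : a ∈ N) :
    a ∈ (N ∪ X) \ (M ∪ X) :=
  ⟨Or.inl ha, by rintro (h | h); exacts [hsep.disjMN.ne_of_mem h ha rfl,
    hsep.disjXN.ne_of_mem h ha rfl]⟩

theorem mem_diff_of_not_mem (hsep : IsSeparation G M X N) {a : V} (hM : a ∉ M) (hX : a ∉ X) :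
    a ∈ (N ∪ X) \ (M ∪ X) :=
  hsep.mem_diff_right (by simpa [hM, hX] using hsep.mem_or_mem_or_mem a)

theorem endCount_cases (hsep : IsSeparation G M X N) {u v : V} (hu : u ∉ X) (hv : v ∉ X) :
    (endCount u v M = 2 ∧ u ∈ (M ∪ X) \ (N ∪ X) ∧ v ∈ (M ∪ X) \ (N ∪ X)) ∨
    (endCount u v M = 1 ∧ (u ∉ M ∪ X ∨ v ∉ M ∪ X) ∧ (u ∉ N ∪ X ∨ v ∉ N ∪ X)) ∨
    (endCount u v M = 0 ∧ u ∈ (N ∪ X) \ (M ∪ X) ∧ v ∈ (N ∪ X) \ (M ∪ X)) := by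
  by_cases huM : u ∈ M <;> by_cases hvM : v ∈ M <;>
    simp only [endCount, huM, hvM, if_true, if_false]
  · exact .inl ⟨trivial, hsep.mem_diff_left huM, hsep.mem_diff_left hvM⟩
  · exact .inr <| .inl ⟨trivial, .inr (hsep.mem_diff_of_not_mem hvM hv).2,
      .inl (hsep.mem_diff_left huM).2⟩
  · exact .inr <| .inl ⟨trivial, .inl (hsep.mem_diff_of_not_mem huM hu).2,
      .inr (hsep.mem_diff_left hvM).2⟩
  · exact .inr <| .inr ⟨trivial, hsep.mem_diff_of_not_mem huM hu, hsep.mem_diff_of_not_mem hvM hv⟩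

end IsSeparation

theorem detours_cross_intersect_general {V : Type*} (G : SimpleGraph V)
    (M X N : Set V) (hsep : IsSeparation G M X N)
    (hclique : G.IsClique X)
    {p₁ p₂ q₁ q₂ : V} (P : G.Walk p₁ p₂) (Q : G.Walk q₁ q₂)
    (hP : IsDetour G P) (hQ : IsDetour G Q)
    (hPX : p₁ ∉ X ∧ p₂ ∉ X) (hQX : q₁ ∉ X ∧ q₂ ∉ X)
    (hPM : ∃ a ∈ P.support, a ∈ M) (hPN : ∃ a ∈ P.support, a ∈ N)
    (hQM : ∃ a ∈ Q.support, a ∈ M) (hQN : ∃ a ∈ Q.support, a ∈ N)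
    (hends : endCount p₁ p₂ M = endCount q₁ q₂ M) :
    ∃ w ∈ X, w ∈ P.support ∧ w ∈ Q.support := by
  have hAB := hsep.edgesInside
  have hX := hsep.union_inter_union
  have hX' : (N ∪ X) ∩ (M ∪ X) = X := by rw [Set.inter_comm, hX]
  rcases hsep.endCount_cases hPX.1 hPX.2 with
      ⟨hcP, hp₁, hp₂⟩ | ⟨hcP, hPA, hPB⟩ | ⟨hcP, hp₁, hp₂⟩ <;>
    rcases hsep.endCount_cases hQX.1 hQX.2 with
      ⟨hcQ, hq₁, hq₂⟩ | ⟨hcQ, hQA, hQB⟩ | ⟨hcQ, hq₁, hq₂⟩ <;>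
    try omega
  · simpa only [hX] using hP.exists_mem_inter_of_excursion hAB (by rwa [hX]) hQ hp₁ hp₂ hq₁ hq₂
      (hPN.imp fun _ => And.imp_right hsep.mem_diff_right)
      (hQN.imp fun _ => And.imp_right hsep.mem_diff_right)
  · simpa only [hX] using hP.exists_mem_inter_of_ends_outside hAB (by rwa [hX]) hQ
      (hPM.imp fun _ => And.imp_right Or.inl) (hPN.imp fun _ => And.imp_right Or.inl)
      (hQM.imp fun _ => And.imp_right Or.inl) (hQN.imp fun _ => And.imp_right Or.inl)
      hPA hPB hQA hQB
  · simpa only [hX'] using hP.exists_mem_inter_of_excursion hAB.symm (by rwa [hX']) hQ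
      hp₁ hp₂ hq₁ hq₂ (hPM.imp fun _ => And.imp_right hsep.mem_diff_left)
      (hQM.imp fun _ => And.imp_right hsep.mem_diff_left)

/-- Lemma 3 of the paper: two longest paths, neither ending in the clique cut `X` of a
separation `(M,X,N)`, both meeting `M` and `N`, with the same number of ends in `M`,
intersect inside `X`. -/
theorem detours_cross_intersect {V : Type*} [Fintype V] (G : SimpleGraph V)
    (hconn : G.Connected) (M X N : Set V) (hsep : IsSeparation G M X N)
    (hclique : G.IsClique X) (hcut : IsCutSet G X)
    {p₁ p₂ q₁ q₂ : V} (P : G.Walk p₁ p₂) (Q : G.Walk q₁ q₂)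
    (hP : IsDetour G P) (hQ : IsDetour G Q)
    (hPX : p₁ ∉ X ∧ p₂ ∉ X) (hQX : q₁ ∉ X ∧ q₂ ∉ X)
    (hPM : ∃ a ∈ P.support, a ∈ M) (hPN : ∃ a ∈ P.support, a ∈ N)
    (hQM : ∃ a ∈ Q.support, a ∈ M) (hQN : ∃ a ∈ Q.support, a ∈ N)
    (hends : endCount p₁ p₂ M = endCount q₁ q₂ M) :
    ∃ w ∈ X, w ∈ P.support ∧ w ∈ Q.support :=
  detours_cross_intersect_general G M X N hsep hclique P Q hP hQ hPX hQX hPM hPN hQM hQN hends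
end

section
/- Let G be a 2-connected chordal graph and X a clique-cut of G. Any two longest cycles of G that each cross X (i.e., each has vertices in at least two components of G−X) must share a common vertex of X. -/
open SimpleGraph

def IsLongestCycle {V : Type*} (G : SimpleGraph V) {u : V} (C : G.Walk u u) : Prop :=
  C.IsCycle ∧ ∀ ⦃x : V⦄ (D : G.Walk x x), D.IsCycle → D.length ≤ C.length

def TwoConnected {V : Type*} [Fintype V] (G : SimpleGraph V) : Prop :=
  3 ≤ Fintype.card V ∧ ∀ v : V, ((⊤ : G.Subgraph).deleteVerts {v}).coe.Connected

/-- A cycle crosses `X` if it has vertices in at least two components of `G − X`. -/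
def CycleCrosses {V : Type*} (G : SimpleGraph V) (X : Set V) {u : V} (C : G.Walk u u) : Prop :=
  ∃ a ∈ C.support, ∃ b ∈ C.support, a ∉ X ∧ b ∉ X ∧ ¬(avoid G X).Reachable a b

/-!
Choose a union `B` of components of `G − X` such that both cycles meet `B` and also the far side
`A = (B ∪ X)ᶜ`. As `X` is a clique, every excursion of a cycle `C` into `B` can be replaced by one
edge inside `X`; this turns `C` into a path `P_C` with ends in `X` and vertex set `V(C) ∖ B`, and in
the same way into a path `Q_C` on `V(C) ∖ A`. These two paths cover `V(C)` and share their ends in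
`X`, so `|C| ≤ |P_C| + |Q_C| + 1`. If `C` and `D` had no common vertex in `X`, then `P_C` and `Q_D`
would be disjoint, and joining their ends by edges of `X` would give a cycle of length
`|P_C| + |Q_D| + 2 ≤ L`, where `L = |C| = |D|`; likewise for `P_D` and `Q_C`. Adding the four
inequalities gives `2L + 2 ≤ 2L`.
-/

section

variable {V : Type*} {G : SimpleGraph V} {X S : Set V}

def IsSeparatedBy (G : SimpleGraph V) (X S : Set V) : Prop :=
  ∀ ⦃a b : V⦄, G.Adj a b → a ∈ S → b ∉ S → b ∈ X

theorem IsSeparatedBy.compl_union (hS : IsSeparatedBy G X S) : IsSeparatedBy G X (S ∪ X)ᶜ := by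
  intro a b hab ha hb
  rw [Set.mem_compl_iff, Set.mem_union, not_or] at ha
  rw [Set.mem_compl_iff, not_not, Set.mem_union] at hb
  exact hb.resolve_left fun hbS => ha.2 (hS hab.symm hbS ha.1)

theorem isSeparatedBy_reachable (Y : Set V) :
    IsSeparatedBy G X {z | z ∉ X ∧ ∃ y ∈ Y, (avoid G X).Reachable z y} := by
  rintro a b hab ⟨haX, y, hy, hay⟩ hb
  by_contra hbX
  have hba : (avoid G X).Adj b a := ⟨hab.symm, hbX, haX⟩
  exact hb ⟨hbX, y, hy, hba.reachable.trans hay⟩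

namespace SimpleGraph.Walk

def IsPathWithEndsIn (X : Set V) {x y : V} (P : G.Walk x y) : Prop :=
  P.IsPath ∧ x ∈ X ∧ y ∈ X

theorem IsPath.exists_shortcut (hX : G.IsClique X) (hS : IsSeparatedBy G X S) {s t : V}
    {w : G.Walk s t} (hw : w.IsPath) (hmeet : ∃ z ∈ w.support, z ∉ S) :
    ∃ (x y : V) (P : G.Walk x y), P.IsPath ∧ (∀ z, z ∈ P.support ↔ z ∈ w.support ∧ z ∉ S) ∧
      (x = s ∨ s ∈ S ∧ x ∈ X) ∧ (y = t ∨ y ∈ X) := by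
  -- Knowing `x = s` whenever `s ∉ S` is what lets the induction step attach the previous vertex.
  induction w with
  | nil => exact ⟨_, _, .nil, .nil, by simpa using hmeet, .inl rfl, .inl rfl⟩
  | @cons a c t hac w ih =>
    obtain ⟨hw, haw⟩ := (cons_isPath_iff hac w).mp hw
    by_cases hmeet' : ∃ z ∈ w.support, z ∉ S
    · obtain ⟨x, y, P, hP, hPw, hx, hy⟩ := ih hw hmeet'
      have hxP := (hPw x).mp P.start_mem_support
      by_cases haS : a ∈ S
      · have hxX : x ∈ X := by
          rcases hx with rfl | ⟨-, hxX⟩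
          exacts [hS hac haS hxP.2, hxX]
        exact ⟨x, y, P, hP, fun z => by grind [support_cons], .inr ⟨haS, hxX⟩, hy⟩
      · have hax : G.Adj a x := by
          rcases hx with rfl | ⟨hcS, hxX⟩
          · exact hac
          · exact hX (hS hac.symm hcS haS) hxX fun h => haw (h ▸ hxP.1)
        refine ⟨a, y, cons hax P, (cons_isPath_iff hax P).mpr ⟨hP, fun h => haw ((hPw a).mp h).1⟩,
          fun z => by grind [support_cons], .inl rfl, hy⟩
    · push Not at hmeet'
      have haS : a ∉ S := by
        obtain ⟨z, hz, hzS⟩ := hmeet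
        rcases List.mem_cons.mp hz with rfl | hz
        exacts [hzS, absurd (hmeet' z hz) hzS]
      exact ⟨a, a, .nil, .nil, fun z => by grind [support_cons, support_nil], .inl rfl,
        .inr (hS hac.symm (hmeet' c w.start_mem_support) haS)⟩

theorem IsCycle.exists_shortcut (hX : G.IsClique X) (hS : IsSeparatedBy G X S) {u : V}
    {C : G.Walk u u} (hC : C.IsCycle) {a b : V} (ha : a ∈ C.support) (haS : a ∈ S)
    (hb : b ∈ C.support) (hbS : b ∉ S) :
    ∃ (x y : V) (P : G.Walk x y), P.IsPathWithEndsIn X ∧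
      ∀ z, z ∈ P.support ↔ z ∈ C.support ∧ z ∉ S := by
  classical
  have hrot := hC.rotate ha
  have hsupp : ∀ z, z ∈ (C.rotate a ha).support ↔ z ∈ C.support :=
    fun z => mem_support_rotate_iff C a ha
  generalize C.rotate a ha = C' at hrot hsupp
  cases C' with
  | nil => exact absurd hrot not_isCycle_nil
  | cons hac q =>
    have hq : q.IsPath := ((cons_isCycle_iff q hac).mp hrot).1
    have hqC : ∀ z, z ∈ q.support ↔ z ∈ C.support := fun z => by
      rw [← hsupp, support_cons, List.mem_cons]
      exact ⟨.inr, fun h => h.elim (fun h => h ▸ q.end_mem_support) id⟩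
    obtain ⟨x, y, P, hP, hPq, hx, hy⟩ := hq.exists_shortcut hX hS ⟨b, (hqC b).mpr hb, hbS⟩
    refine ⟨x, y, P, ⟨hP, ?_, ?_⟩, fun z => by rw [hPq, hqC]⟩
    · rcases hx with rfl | ⟨-, hxX⟩
      exacts [hS hac haS ((hPq _).mp P.start_mem_support).2, hxX]
    · rcases hy with rfl | hyX
      exacts [absurd haS ((hPq _).mp P.end_mem_support).2, hyX]

theorem IsCycle.length_le_of_subset_union {u x₁ x₂ y₁ y₂ : V} {C : G.Walk u u} (hC : C.IsCycle)
    {P : G.Walk x₁ x₂} {Q : G.Walk y₁ y₂} (hP : P.IsPath) (hQ : Q.IsPath)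
    (hcover : ∀ z ∈ C.support, z ∈ P.support ∨ z ∈ Q.support)
    (hmeet : ∃ z ∈ P.support, z ∈ Q.support) :
    C.length ≤ P.length + Q.length + 1 := by
  classical
  have hCcard : C.support.tail.toFinset.card = C.length := by
    rw [List.toFinset_card_of_nodup hC.support_nodup, List.length_tail, length_support]; rfl
  have hsub : C.support.tail.toFinset ⊆ P.support.toFinset ∪ Q.support.toFinset := by
    intro z hz
    simpa using hcover z (List.mem_of_mem_tail (List.mem_toFinset.mp hz))
  have hinter : 0 < (P.support.toFinset ∩ Q.support.toFinset).card := by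
    obtain ⟨z, hzP, hzQ⟩ := hmeet
    exact Finset.card_pos.mpr ⟨z, by simp [hzP, hzQ]⟩
  have hPcard : P.support.toFinset.card = P.length + 1 := by
    rw [List.toFinset_card_of_nodup hP.support_nodup, length_support]
  have hQcard : Q.support.toFinset.card = Q.length + 1 := by
    rw [List.toFinset_card_of_nodup hQ.support_nodup, length_support]
  have := Finset.card_union_add_card_inter P.support.toFinset Q.support.toFinset
  have := Finset.card_le_card hsub
  omega

end SimpleGraph.Walk

open SimpleGraph.Walk

theorem SimpleGraph.IsClique.exists_isCycle_of_isPathWithEndsIn (hX : G.IsClique X)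
    {x₁ x₂ y₁ y₂ : V} {P : G.Walk x₁ x₂} {Q : G.Walk y₁ y₂} (hP : P.IsPathWithEndsIn X)
    (hQ : Q.IsPathWithEndsIn X) (hPQ : ∀ z ∈ P.support, z ∉ Q.support)
    (hlen : 0 < P.length + Q.length) :
    ∃ (w : V) (Z : G.Walk w w), Z.IsCycle ∧ Z.length = P.length + Q.length + 2 := by
  obtain ⟨hP, hx₁, hx₂⟩ := hP
  obtain ⟨hQ, hy₁, hy₂⟩ := hQ
  have h₂₁ : G.Adj x₂ y₁ := hX hx₂ hy₁ fun h => hPQ _ P.end_mem_support (h ▸ Q.start_mem_support)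
  have h₂₁' : G.Adj y₂ x₁ := hX hy₂ hx₁ fun h => hPQ _ P.start_mem_support (h ▸ Q.end_mem_support)
  have hp : (P.append (.cons h₂₁ Q)).IsPath := by
    rw [isPath_def, support_append, support_cons, List.tail_cons]
    exact List.nodup_append.mpr ⟨hP.support_nodup, hQ.support_nodup,
      fun a ha b hb hab => hPQ a ha (hab ▸ hb)⟩
  refine ⟨y₂, .cons h₂₁' (P.append (.cons h₂₁ Q)),
    isCycle_iff_isPath_tail_and_le_length.mpr ⟨by simpa using hp, ?_⟩, ?_⟩ <;>
  simp only [length_cons, length_append] <;> omega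

def MeetsBothSides (X B : Set V) {u : V} (C : G.Walk u u) : Prop :=
  (∃ z ∈ C.support, z ∈ B) ∧ ∃ z ∈ C.support, z ∉ B ∪ X

theorem exists_isSeparatedBy_of_not_reachable {u v a a' b b' : V} {C : G.Walk u u}
    {D : G.Walk v v} (ha : a ∈ C.support) (ha' : a' ∈ C.support) (hb : b ∈ D.support)
    (hb' : b' ∈ D.support) (haX : a ∉ X) (ha'X : a' ∉ X) (hbX : b ∉ X) (hb'X : b' ∉ X)
    (haa' : ¬(avoid G X).Reachable a a') (hbb' : ¬(avoid G X).Reachable b b')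
    (ha'b : ¬(avoid G X).Reachable a' b) (hab' : ¬(avoid G X).Reachable a b') :
    ∃ B, IsSeparatedBy G X B ∧ MeetsBothSides X B C ∧ MeetsBothSides X B D := by
  refine ⟨_, isSeparatedBy_reachable {a, b}, ⟨⟨a, ha, haX, a, .inl rfl, .refl a⟩, a', ha', ?_⟩,
    ⟨⟨b, hb, hbX, b, .inr rfl, .refl b⟩, b', hb', ?_⟩⟩
  · rintro (⟨-, y, rfl | rfl, h⟩ | h)
    exacts [haa' h.symm, ha'b h, ha'X h]
  · rintro (⟨-, y, rfl | rfl, h⟩ | h)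
    exacts [hab' h.symm, hbb' h.symm, hb'X h]

theorem exists_isSeparatedBy_of_cycleCrosses {u v : V} {C : G.Walk u u} {D : G.Walk v v}
    (hC : CycleCrosses G X C) (hD : CycleCrosses G X D) :
    ∃ B, IsSeparatedBy G X B ∧ MeetsBothSides X B C ∧ MeetsBothSides X B D := by
  obtain ⟨a, ha, a', ha', haX, ha'X, haa'⟩ := hC
  obtain ⟨b, hb, b', hb', hbX, hb'X, hbb'⟩ := hD
  -- `B` is the union of the components of `a` and `b`, after swapping `a, a'` or `b, b'` if the
  -- far vertex of one cycle lies in the component chosen for the other.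
  by_cases ha'b : (avoid G X).Reachable a' b
  · exact exists_isSeparatedBy_of_not_reachable ha' ha hb hb' ha'X haX hbX hb'X
      (fun h => haa' h.symm) hbb' (fun h => haa' (h.trans ha'b.symm))
      (fun h => hbb' (ha'b.symm.trans h))
  by_cases hab' : (avoid G X).Reachable a b'
  · exact exists_isSeparatedBy_of_not_reachable ha ha' hb' hb haX ha'X hb'X hbX
      haa' (fun h => hbb' h.symm) (fun h => haa' (hab'.trans h.symm))
      (fun h => hbb' (h.symm.trans hab'))
  exact exists_isSeparatedBy_of_not_reachable ha ha' hb hb' haX ha'X hbX hb'X haa' hbb' ha'b hab'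

theorem MeetsBothSides.exists_shortcuts (hX : G.IsClique X) {B : Set V}
    (hB : IsSeparatedBy G X B) {u : V} {C : G.Walk u u} (hC : C.IsCycle)
    (hCB : MeetsBothSides X B C) :
    ∃ (x₁ x₂ y₁ y₂ : V) (P : G.Walk x₁ x₂) (Q : G.Walk y₁ y₂),
      P.IsPathWithEndsIn X ∧ Q.IsPathWithEndsIn X ∧
      (∀ z ∈ P.support, z ∈ C.support ∧ z ∉ B) ∧ (∀ z ∈ Q.support, z ∈ C.support ∧ z ∈ B ∪ X) ∧
      C.length ≤ P.length + Q.length + 1 := by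
  obtain ⟨⟨c, hc, hcB⟩, c', hc', hc'BX⟩ := hCB
  obtain ⟨x₁, x₂, P, hP, hPC⟩ := hC.exists_shortcut hX hB hc hcB hc' fun h => hc'BX (.inl h)
  obtain ⟨y₁, y₂, Q, hQ, hQC⟩ :=
    hC.exists_shortcut hX hB.compl_union hc' hc'BX hc (not_not.mpr (.inl hcB))
  refine ⟨x₁, x₂, y₁, y₂, P, Q, hP, hQ, fun z hz => (hPC z).mp hz,
    fun z hz => ((hQC z).mp hz).imp_right not_not.mp, hC.length_le_of_subset_union hP.1 hQ.1 ?_ ?_⟩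
  · intro z hz
    by_cases hzB : z ∈ B
    · exact .inr ((hQC z).mpr ⟨hz, not_not.mpr (.inl hzB)⟩)
    · exact .inl ((hPC z).mpr ⟨hz, hzB⟩)
  · have hx₁C := ((hPC x₁).mp P.start_mem_support).1
    exact ⟨x₁, P.start_mem_support, (hQC x₁).mpr ⟨hx₁C, not_not.mpr (.inr hP.2.1)⟩⟩

namespace IsLongestCycle

theorem length_add_length_add_two_le (hX : G.IsClique X) {u x₁ x₂ y₁ y₂ : V} {C : G.Walk u u}
    (hC : IsLongestCycle G C) {P : G.Walk x₁ x₂} {Q : G.Walk y₁ y₂} (hP : P.IsPathWithEndsIn X)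
    (hQ : Q.IsPathWithEndsIn X) (hPQ : ∀ z ∈ P.support, z ∉ Q.support) :
    P.length + Q.length + 2 ≤ C.length := by
  rcases Nat.eq_zero_or_pos (P.length + Q.length) with h | h
  · -- both paths are single vertices: there is no cycle, but `C` has length at least 3
    have := hC.1.three_le_length
    omega
  · obtain ⟨w, Z, hZ, hZlen⟩ := hX.exists_isCycle_of_isPathWithEndsIn hP hQ hPQ h
    exact hZlen ▸ hC.2 Z hZ

theorem exists_mem_inter (hX : G.IsClique X) {B : Set V} (hB : IsSeparatedBy G X B)
    {u v : V} {C : G.Walk u u} {D : G.Walk v v} (hC : IsLongestCycle G C)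
    (hD : IsLongestCycle G D) (hCB : MeetsBothSides X B C) (hDB : MeetsBothSides X B D) :
    ∃ w ∈ X, w ∈ C.support ∧ w ∈ D.support := by
  by_contra! hCD
  obtain ⟨_, _, _, _, PC, QC, hPC, hQC, hPCs, hQCs, hClen⟩ := hCB.exists_shortcuts hX hB hC.1
  obtain ⟨_, _, _, _, PD, QD, hPD, hQD, hPDs, hQDs, hDlen⟩ := hDB.exists_shortcuts hX hB hD.1
  have hCD₁ := hC.length_add_length_add_two_le hX hPC hQD fun z hz hz' =>
    hCD z (((hQDs z hz').2).resolve_left (hPCs z hz).2) (hPCs z hz).1 (hQDs z hz').1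
  have hCD₂ := hC.length_add_length_add_two_le hX hPD hQC fun z hz hz' =>
    hCD z (((hQCs z hz').2).resolve_left (hPDs z hz).2) (hQCs z hz').1 (hPDs z hz).1
  have hlen := le_antisymm (hD.2 C hC.1) (hC.2 D hD.1)
  omega

end IsLongestCycle

end

theorem longestCycles_cross_intersect_general {V : Type*} (G : SimpleGraph V)
    (X : Set V) (hX : G.IsClique X)
    {u v : V} (C : G.Walk u u) (D : G.Walk v v)
    (hC : IsLongestCycle G C) (hD : IsLongestCycle G D)
    (hCc : CycleCrosses G X C) (hDc : CycleCrosses G X D) :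
    ∃ w ∈ X, w ∈ C.support ∧ w ∈ D.support := by
  obtain ⟨B, hB, hCB, hDB⟩ := exists_isSeparatedBy_of_cycleCrosses hCc hDc
  exact hC.exists_mem_inter hX hB hD hCB hDB

/-- Two longest cycles of a 2-connected chordal graph that both cross a clique-cut `X`
share a vertex of `X`. -/
theorem longestCycles_cross_intersect {V : Type*} [Fintype V] (G : SimpleGraph V)
    (h2 : TwoConnected G) (hchord : IsChordal G) (X : Set V) (hX : G.IsClique X)
    (hcut : ∃ a b : V, a ∉ X ∧ b ∉ X ∧ ¬(avoid G X).Reachable a b)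
    {u v : V} (C : G.Walk u u) (D : G.Walk v v)
    (hC : IsLongestCycle G C) (hD : IsLongestCycle G D)
    (hCc : CycleCrosses G X C) (hDc : CycleCrosses G X D) :
    ∃ w ∈ X, w ∈ C.support ∧ w ∈ D.support :=
  longestCycles_cross_intersect_general G X hX C D hC hD hCc hDc
end

section
/- Let G be a connected chordal graph with clique-cut X and let P, Q, R be three longest paths of G, each crossing X and each closed with respect to X (both end vertices in its home component), with pairwise distinct home components C_P, C_Q, C_R, and pairwise disjoint intersections with X. Then such a configuration is impossible: one can reassemble pieces of P, Q, R using edges of X into three paths whose total length exceeds |P|+|Q|+|R|, contradicting maximality. -/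
open SimpleGraph

/-- `P` crosses `X`: it has vertices in at least two components of `G − X`. -/
def PathCrosses {V : Type*} (G : SimpleGraph V) (X : Set V) {u v : V} (P : G.Walk u v) : Prop :=
  ∃ a ∈ P.support, ∃ b ∈ P.support, a ∉ X ∧ b ∉ X ∧ ¬(avoid G X).Reachable a b

/-!
For each of the three paths, colour the vertices outside `X` by their component of `G − X`,
with three colours chosen so that a path's home component is the only one receiving that path's
own colour, and so that at every vertex the three paths use three different colours. Cut each
path at vertices of `X` into maximal monochromatic segments. Segments of one colour, taken from
all three paths, are pairwise disjoint, and all their ends except the two outer ends of the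
owning path lie in the clique `X`; so they chain into a single path. Since every path crosses
`X`, it has at least two segments, and the three new paths have total length at least
`|P| + |Q| + |R| + 3`, so one of them is longer than a longest path.
-/

theorem Finset.exists_cons_nodup_pairwise_ne {α : Type*} [DecidableEq α] {S : Finset α}
    {first last : α} (hfirst : first ∈ S) (hlast : last ∈ S) (hne : first ≠ last) :
    ∃ rest : List α, (first :: rest).Nodup ∧ (first :: rest).toFinset = S ∧
      (first :: rest).Pairwise fun s s' => s ≠ last ∧ s' ≠ first := by
  set mid := ((S.erase first).erase last).toList
  have hmid : ∀ s ∈ mid, s ∈ S ∧ s ≠ first ∧ s ≠ last := by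
    intro s hs
    simp only [mid, Finset.mem_toList, Finset.mem_erase] at hs
    exact ⟨hs.2.2, hs.2.1, hs.1⟩
  refine ⟨mid ++ [last], ?_, ?_, ?_⟩
  · simp only [List.nodup_cons, List.mem_append, List.mem_singleton, not_or, List.nodup_append]
    exact ⟨⟨fun h => (hmid _ h).2.1 rfl, hne⟩, Finset.nodup_toList _, by simp,
      fun s hs _ h h' => (hmid s hs).2.2 (h'.trans h)⟩
  · ext s
    by_cases h1 : s = first <;> by_cases h2 : s = last <;> simp_all [mid]
  · simp only [List.pairwise_cons, List.pairwise_append, List.mem_append, List.mem_singleton]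
    refine ⟨?_, List.pairwise_of_forall_mem_list ?_, by simp, ?_⟩
    · rintro s (hs | rfl)
      exacts [⟨hne, (hmid s hs).2.1⟩, ⟨hne, hne.symm⟩]
    · exact fun s hs s' hs' => ⟨(hmid s hs).2.2, (hmid s' hs').2.1⟩
    · rintro s hs _ rfl
      exact ⟨(hmid s hs).2.2, hne.symm⟩

theorem exists_fin_three_coloring {β : Type*} {c : Fin 3 → β} (hc : Function.Injective c) :
    ∃ f : β → Fin 3 → Fin 3, (∀ x, Function.Injective (f x)) ∧ ∀ x i, f x i = i ↔ x = c i := by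
  classical
  -- For `x = c j`, `i ↦ -(j + i)` is a permutation fixing only `j`; otherwise `i ↦ i + 1`
  -- fixes nothing.
  refine ⟨fun x i => if x ∈ Set.range c then -(Function.invFun c x + i) else i + 1,
    fun x => ?_, fun x i => ?_⟩
  · by_cases h : x ∈ Set.range c <;> intro i j hij <;> simpa [h] using hij
  · by_cases h : x ∈ Set.range c
    · obtain ⟨j, rfl⟩ := h
      simp only [Set.mem_range_self, if_true, Function.leftInverse_invFun hc j, hc.eq_iff]
      revert i j
      decide
    · simp only [h, if_false]
      exact ⟨fun hi => absurd hi (by revert i; decide), fun hx => absurd ⟨i, hx.symm⟩ h⟩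

namespace SimpleGraph

structure ColoredSegment {V : Type*} (G : SimpleGraph V) (κ : Type*) where
  color : κ
  start : V
  finish : V
  walk : G.Walk start finish

variable {V κ : Type*} {G : SimpleGraph V}

namespace ColoredSegment

theorem exists_walk_support_eq_flatMap :
    ∀ (x : ColoredSegment G κ) (l : List (ColoredSegment G κ)),
      (x :: l).IsChain (fun s s' => G.Adj s.finish s'.start) →
        ∃ v, ∃ N : G.Walk x.start v, N.support = (x :: l).flatMap fun s => s.walk.support
  | x, [], _ => ⟨_, x.walk, by simp⟩
  | x, y :: l, h => by
    rw [List.isChain_cons_cons] at h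
    obtain ⟨v, N, hN⟩ := exists_walk_support_eq_flatMap y l h.2
    exact ⟨v, x.walk.append (.cons h.1 N), by simp [Walk.support_append, hN]⟩

theorem exists_isPath_length_eq_sum {X : Set V} (hX : G.IsClique X)
    [DecidableEq (ColoredSegment G κ)] {S : Finset (ColoredSegment G κ)}
    {first last : ColoredSegment G κ} (hfirst : first ∈ S) (hlast : last ∈ S) (hne : first ≠ last)
    (hstart : ∀ s ∈ S, s ≠ first → s.start ∈ X) (hfinish : ∀ s ∈ S, s ≠ last → s.finish ∈ X)
    (hpath : ∀ s ∈ S, s.walk.IsPath)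
    (hdisj : (S : Set (ColoredSegment G κ)).Pairwise fun s s' =>
      s.walk.support.Disjoint s'.walk.support) :
    ∃ (u v : V) (N : G.Walk u v), N.IsPath ∧ N.length + 1 = ∑ s ∈ S, s.walk.support.length := by
  obtain ⟨rest, hnodup, hS, hends⟩ := Finset.exists_cons_nodup_pairwise_ne hfirst hlast hne
  have hsub : ∀ s ∈ first :: rest, s ∈ S := fun s hs => hS ▸ List.mem_toFinset.2 hs
  have hdisj' : (first :: rest).Pairwise fun s s' => s.walk.support.Disjoint s'.walk.support :=
    hnodup.pairwise_of_set_pairwise (hdisj.mono hsub)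
  have hadj : (first :: rest).Pairwise fun s s' => G.Adj s.finish s'.start := by
    refine (hdisj'.and hends).imp_of_mem fun {s s'} hs hs' ⟨hd, hl, hf⟩ => hX ?_ ?_ ?_
    · exact hfinish s (hsub s hs) hl
    · exact hstart s' (hsub s' hs') hf
    · intro h
      exact hd s.walk.end_mem_support (by rw [h]; exact s'.walk.start_mem_support)
  obtain ⟨v, N, hN⟩ := exists_walk_support_eq_flatMap first rest hadj.isChain
  refine ⟨_, v, N, Walk.IsPath.mk' ?_, ?_⟩
  · rw [hN, List.nodup_flatMap]
    exact ⟨fun s hs => (hpath s (hsub s hs)).support_nodup, hdisj'⟩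
  · rw [← Walk.length_support, hN, List.length_flatMap, ← hS, List.sum_toFinset _ hnodup]

end ColoredSegment

/-- Models the cutting of `w` at vertices of `X` into segments that are monochromatic for `g`
outside `X`; only the properties used later are recorded, together with `start_notMem_tail`, an
invariant of the inductive construction. -/
structure IsSegmentation (g : V → κ) (X : Set V) {a b : V} (w : G.Walk a b)
    (L : List (ColoredSegment G κ)) : Prop where
  isPath : ∀ s ∈ L, s.walk.IsPath
  support_subset : ∀ s ∈ L, s.walk.support ⊆ w.support
  color_eq : ∀ s ∈ L, ∀ v ∈ s.walk.support, v ∉ X → g v = s.color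
  exists_mem : ∀ v ∈ w.support, ∃ s ∈ L, v ∈ s.walk.support
  sum_length : (L.map fun s => s.walk.length).sum = w.length
  pairwise_mem : L.Pairwise fun s s' => s.finish ∈ X ∧ s'.start ∈ X
  pairwise_disjoint :
    L.Pairwise fun s s' => s.color = s'.color → s.walk.support.Disjoint s'.walk.support
  head : ∀ s ∈ L.head?, s.start = a ∧ (a ∉ X → s.color = g a)
  start_notMem_tail : ∀ s ∈ L.tail, a ∉ s.walk.support
  getLast_color : ∀ s ∈ L.getLast?, s.color = g b

namespace IsSegmentation

variable {g : V → κ} {X : Set V}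

theorem nil (b : V) : IsSegmentation g X (Walk.nil : G.Walk b b) [⟨g b, b, b, .nil⟩] := by
  constructor <;> simp

variable {a a' b z : V} {c : κ} {p : G.Walk a' b} {q : G.Walk a' z}
  {rest : List (ColoredSegment G κ)}

theorem cons_merge (hL : IsSegmentation g X p (⟨c, a', z, q⟩ :: rest)) (h : G.Adj a a')
    (ha : a ∉ p.support) (hc : a ∉ X → c = g a) :
    IsSegmentation g X (.cons h p) (⟨c, a, z, .cons h q⟩ :: rest) := by
  have hq : q.support ⊆ p.support := hL.support_subset _ List.mem_cons_self
  have hrest : ∀ s ∈ rest, a ∉ s.walk.support :=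
    fun s hs hmem => ha (hL.support_subset s (List.mem_cons_of_mem _ hs) hmem)
  constructor
  case isPath =>
    simp only [List.mem_cons, forall_eq_or_imp, Walk.cons_isPath_iff]
    exact ⟨⟨hL.isPath _ List.mem_cons_self, fun h => ha (hq h)⟩,
      fun s hs => hL.isPath s (List.mem_cons_of_mem _ hs)⟩
  case support_subset =>
    simp only [List.mem_cons, forall_eq_or_imp, Walk.support_cons]
    exact ⟨List.cons_subset_cons _ hq, fun s hs v hv =>
      List.mem_cons_of_mem _ (hL.support_subset s (List.mem_cons_of_mem _ hs) hv)⟩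
  case color_eq =>
    simp only [List.mem_cons, forall_eq_or_imp, Walk.support_cons]
    refine ⟨⟨fun haX => (hc haX).symm, hL.color_eq _ List.mem_cons_self⟩,
      fun s hs => hL.color_eq s (List.mem_cons_of_mem _ hs)⟩
  case exists_mem =>
    intro v hv
    rcases List.mem_cons.1 hv with rfl | hv
    · exact ⟨_, List.mem_cons_self, by simp⟩
    obtain ⟨s, hs, hvs⟩ := hL.exists_mem v hv
    rcases List.mem_cons.1 hs with rfl | hs
    · exact ⟨_, List.mem_cons_self, by simp [hvs]⟩
    · exact ⟨s, List.mem_cons_of_mem _ hs, hvs⟩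
  case sum_length =>
    have := hL.sum_length
    simp only [List.map_cons, List.sum_cons, Walk.length_cons] at this ⊢
    omega
  case pairwise_mem => exact List.pairwise_cons.2 (List.pairwise_cons.1 hL.pairwise_mem)
  case pairwise_disjoint =>
    obtain ⟨hhead, htail⟩ := List.pairwise_cons.1 hL.pairwise_disjoint
    refine List.pairwise_cons.2 ⟨fun s hs hcol => ?_, htail⟩
    simp only [Walk.support_cons, List.disjoint_cons_left]
    exact ⟨hrest s hs, hhead s hs hcol⟩
  case head => simpa using hc
  case start_notMem_tail => simpa using hrest
  case getLast_color =>
    intro s hs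
    rw [List.getLast?_cons, Option.mem_some_iff] at hs
    have := hL.getLast_color (rest.getLast?.getD ⟨c, a', z, q⟩) (by simp [List.getLast?_cons])
    subst hs
    revert this
    cases rest.getLast? <;> simp

theorem cons_cut (hL : IsSegmentation g X p (⟨c, a', z, q⟩ :: rest)) (h : G.Adj a a')
    (ha : a ∉ p.support) (hg : ∀ ⦃u v⦄, G.Adj u v → u ∉ X → v ∉ X → g u = g v)
    (haX : a ∉ X) (hc : c ≠ g a) :
    IsSegmentation g X (.cons h p) (⟨g a, a, a', .cons h .nil⟩ :: ⟨c, a', z, q⟩ :: rest) := by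
  have ha'X : a' ∈ X := by
    by_contra ha'X
    exact hc (((hL.head _ rfl).2 ha'X).trans (hg h haX ha'X).symm)
  have hrest : ∀ s ∈ ⟨c, a', z, q⟩ :: rest, a ∉ s.walk.support :=
    fun s hs hmem => ha (hL.support_subset s hs hmem)
  constructor
  case isPath =>
    rintro s (_ | ⟨_, hs⟩)
    · simp [h.ne]
    · exact hL.isPath s hs
  case support_subset =>
    rintro s (_ | ⟨_, hs⟩)
    · simp
    · exact fun v hv => List.mem_cons_of_mem _ (hL.support_subset s hs hv)
  case color_eq =>
    rintro s (_ | ⟨_, hs⟩)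
    · simp only [Walk.support_cons, Walk.support_nil, List.mem_cons, List.not_mem_nil, or_false]
      rintro v (rfl | rfl) hvX
      exacts [rfl, absurd ha'X hvX]
    · exact hL.color_eq s hs
  case exists_mem =>
    intro v hv
    rcases List.mem_cons.1 hv with rfl | hv
    · exact ⟨_, List.mem_cons_self, by simp⟩
    obtain ⟨s, hs, hvs⟩ := hL.exists_mem v hv
    exact ⟨s, List.mem_cons_of_mem _ hs, hvs⟩
  case sum_length =>
    have := hL.sum_length
    simp only [List.map_cons, List.sum_cons, Walk.length_cons, Walk.length_nil] at this ⊢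
    omega
  case pairwise_mem =>
    refine List.pairwise_cons.2 ⟨?_, hL.pairwise_mem⟩
    rintro s (_ | ⟨_, hs⟩)
    · exact ⟨ha'X, ha'X⟩
    · exact ⟨ha'X, ((List.pairwise_cons.1 hL.pairwise_mem).1 s hs).2⟩
  case pairwise_disjoint =>
    refine List.pairwise_cons.2 ⟨?_, hL.pairwise_disjoint⟩
    rintro s (_ | ⟨_, hs⟩) hcol
    · exact absurd hcol.symm hc
    · simp [hrest s (List.mem_cons_of_mem _ hs), hL.start_notMem_tail s hs]
  case head => simp
  case start_notMem_tail => simpa using hrest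
  case getLast_color => simpa using hL.getLast_color

end IsSegmentation

theorem exists_isSegmentation (g : V → κ) (X : Set V)
    (hg : ∀ ⦃u v⦄, G.Adj u v → u ∉ X → v ∉ X → g u = g v) :
    ∀ {a b : V} (w : G.Walk a b), w.IsPath → ∃ L, IsSegmentation g X w L
  | _, _, .nil, _ => ⟨_, .nil _⟩
  | a, _, .cons h p, hw => by
    rw [Walk.cons_isPath_iff] at hw
    obtain ⟨L, hL⟩ := exists_isSegmentation g X hg p hw.1
    obtain ⟨⟨c, a', z, q⟩, rest, rfl⟩ : ∃ x rest, L = x :: rest := by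
      obtain ⟨s, hs, -⟩ := hL.exists_mem _ p.start_mem_support
      exact List.exists_cons_of_ne_nil (List.ne_nil_of_mem hs)
    obtain rfl : a' = _ := (hL.head _ rfl).1
    by_cases hc : a ∉ X → c = g a
    · exact ⟨_, hL.cons_merge h hw.2 hc⟩
    · rw [Classical.not_imp] at hc
      exact ⟨_, hL.cons_cut h hw.2 hg hc.1 hc.2⟩

namespace IsSegmentation

variable {g : V → κ} {X : Set V} {a b : V} {w : G.Walk a b} {L : List (ColoredSegment G κ)}

theorem nodup (hL : IsSegmentation g X w L) : L.Nodup :=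
  hL.pairwise_disjoint.imp fun {s _} h hs => by
    subst hs
    exact h rfl s.walk.start_mem_support s.walk.start_mem_support

theorem start_mem (hL : IsSegmentation g X w L) {s : ColoredSegment G κ} (hs : s ∈ L)
    (hhead : L.head? ≠ some s) : s.start ∈ X := by
  obtain _ | ⟨x, rest⟩ := L
  · simp at hs
  · have hx : x ≠ s := fun h => hhead (by simp [h])
    have hs' : s ∈ rest := (List.mem_cons.1 hs).resolve_left (Ne.symm hx)
    exact ((List.pairwise_cons.1 hL.pairwise_mem).1 s hs').2

theorem finish_mem (hL : IsSegmentation g X w L) {s : ColoredSegment G κ} (hs : s ∈ L)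
    (hlast : L.getLast? ≠ some s) : s.finish ∈ X := by
  obtain rfl | ⟨init, y, rfl⟩ := L.eq_nil_or_concat'
  · simp at hs
  · have hy : y ≠ s := fun h => hlast (by simp [h])
    have hs' : s ∈ init := (List.mem_append.1 hs).resolve_right (by simpa [eq_comm] using hy)
    exact (List.pairwise_append.1 hL.pairwise_mem).2.2 s hs' y List.mem_cons_self |>.1

theorem sum_support_length (hL : IsSegmentation g X w L) :
    (L.map fun s => s.walk.support.length).sum = w.length + L.length := by
  simp [Walk.length_support, List.sum_map_add, hL.sum_length]

theorem disjoint_of_mem (hL : IsSegmentation g X w L) {s s' : ColoredSegment G κ} (hs : s ∈ L)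
    (hs' : s' ∈ L) (hne : s ≠ s') (hc : s.color = s'.color) :
    s.walk.support.Disjoint s'.walk.support := by
  have : Std.Symm fun s s' : ColoredSegment G κ =>
      s.color = s'.color → s.walk.support.Disjoint s'.walk.support :=
    ⟨fun _ _ h hc => (h hc.symm).symm⟩
  exact hL.pairwise_disjoint.forall hs hs' hne hc

theorem disjoint_of_color_eq {g' : V → κ} {a' b' : V} {w' : G.Walk a' b'}
    {L' : List (ColoredSegment G κ)} (hL : IsSegmentation g X w L)
    (hL' : IsSegmentation g' X w' L') (hg : ∀ v ∉ X, g v ≠ g' v)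
    (hX : ∀ v ∈ X, ¬(v ∈ w.support ∧ v ∈ w'.support)) {s s' : ColoredSegment G κ} (hs : s ∈ L)
    (hs' : s' ∈ L') (hc : s.color = s'.color) : s.walk.support.Disjoint s'.walk.support := by
  intro v hv hv'
  by_cases hvX : v ∈ X
  · exact hX v hvX ⟨hL.support_subset s hs hv, hL'.support_subset s' hs' hv'⟩
  · exact hg v hvX <| (hL.color_eq s hs v hv hvX).trans <|
      hc.trans (hL'.color_eq s' hs' v hv' hvX).symm

theorem exists_head_ne_getLast (hL : IsSegmentation g X w L) (hw : PathCrosses G X w)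
    (ha : a ∉ X) (hhome : ∀ v, g v = g a → (avoid G X).Reachable v a) :
    ∃ first last, L.head? = some first ∧ L.getLast? = some last ∧ first ≠ last ∧
      first.color = g a ∧ last.color = g b := by
  obtain ⟨v, hv, hvX, hgv⟩ : ∃ v ∈ w.support, v ∉ X ∧ g v ≠ g a := by
    obtain ⟨u, hu, v, hv, huX, hvX, huv⟩ := hw
    by_cases hgu : g u = g a
    · exact ⟨v, hv, hvX, fun hgv => huv ((hhome u hgu).trans (hhome v hgv).symm)⟩
    · exact ⟨u, hu, huX, hgu⟩
  obtain ⟨s, hs, hvs⟩ := hL.exists_mem v hv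
  obtain _ | ⟨first, rest⟩ := L
  · simp at hs
  obtain ⟨last, hlast⟩ : ∃ last, rest.getLast? = some last := by
    refine Option.isSome_iff_exists.1 (List.getLast?_isSome.2 ?_)
    rintro rfl
    rw [hL.color_eq _ hs v hvs hvX, List.mem_singleton.1 hs] at hgv
    exact hgv ((hL.head _ rfl).2 ha)
  refine ⟨first, last, rfl, by simp [List.getLast?_cons, hlast], ?_, (hL.head _ rfl).2 ha,
    hL.getLast_color _ (by simp [List.getLast?_cons, hlast])⟩
  rintro rfl
  exact (List.nodup_cons.1 hL.nodup).1 (List.mem_of_mem_getLast? hlast)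

end IsSegmentation

section Assembly

variable {ι : Type*} [Fintype ι] {X : Set V} {a b : ι → V} {W : ∀ i, G.Walk (a i) (b i)}

theorem sum_support_length_biUnion [DecidableEq (ColoredSegment G κ)]
    {L : ι → List (ColoredSegment G κ)} {g : ι → V → κ}
    (hL : ∀ i, IsSegmentation (g i) X (W i) (L i))
    (hcross : Pairwise fun i j => ∀ s ∈ L i, ∀ s' ∈ L j,
      s.color = s'.color → s.walk.support.Disjoint s'.walk.support) :
    ∑ s ∈ Finset.univ.biUnion (fun i => (L i).toFinset), s.walk.support.length =
      ∑ i, ((W i).length + (L i).length) := by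
  rw [Finset.sum_biUnion]
  · exact Finset.sum_congr rfl fun i _ => by
      rw [List.sum_toFinset _ (hL i).nodup, (hL i).sum_support_length]
  · intro i _ j _ hij
    refine Finset.disjoint_left.2 fun s hsi hsj => ?_
    exact hcross hij s (List.mem_toFinset.1 hsi) s (List.mem_toFinset.1 hsj) rfl
      s.walk.start_mem_support s.walk.start_mem_support

theorem exists_isPath_length_eq_sum_color [DecidableEq ι] [DecidableEq (ColoredSegment G ι)]
    (hX : G.IsClique X) {L : ι → List (ColoredSegment G ι)} {g : ι → V → ι}
    (hL : ∀ i, IsSegmentation (g i) X (W i) (L i))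
    (hcross : Pairwise fun i j => ∀ s ∈ L i, ∀ s' ∈ L j,
      s.color = s'.color → s.walk.support.Disjoint s'.walk.support)
    (hends : ∀ i, ∃ first last, (L i).head? = some first ∧ (L i).getLast? = some last ∧
      first ≠ last ∧ first.color = i ∧ last.color = i) (t : ι) :
    ∃ (u v : V) (N : G.Walk u v), N.IsPath ∧ N.length + 1 =
      ∑ s ∈ Finset.univ.biUnion (fun i => (L i).toFinset) with s.color = t,
        s.walk.support.length := by
  choose first last hfirst hlast hne hfirst_color hlast_color using hends
  have hmem : ∀ s, s ∈ {s ∈ Finset.univ.biUnion (fun i => (L i).toFinset) | s.color = t} ↔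
      ∃ i, s ∈ L i ∧ s.color = t := by
    simp
  refine ColoredSegment.exists_isPath_length_eq_sum hX (first := first t) (last := last t)
    ((hmem _).2 ⟨t, List.mem_of_mem_head? (hfirst t), hfirst_color t⟩)
    ((hmem _).2 ⟨t, List.mem_of_mem_getLast? (hlast t), hlast_color t⟩) (hne t) ?_ ?_ ?_ ?_
  · intro s hs hsf
    obtain ⟨i, hsi, hst⟩ := (hmem s).1 hs
    refine (hL i).start_mem hsi fun h => hsf ?_
    obtain rfl : first i = s := Option.some_injective _ ((hfirst i).symm.trans h)
    obtain rfl : i = t := (hfirst_color i).symm.trans hst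
    rfl
  · intro s hs hsl
    obtain ⟨i, hsi, hst⟩ := (hmem s).1 hs
    refine (hL i).finish_mem hsi fun h => hsl ?_
    obtain rfl : last i = s := Option.some_injective _ ((hlast i).symm.trans h)
    obtain rfl : i = t := (hlast_color i).symm.trans hst
    rfl
  · intro s hs
    obtain ⟨i, hsi, -⟩ := (hmem s).1 hs
    exact (hL i).isPath s hsi
  · intro s hs s' hs' hss'
    obtain ⟨i, hsi, hst⟩ := (hmem s).1 hs
    obtain ⟨j, hsj, hs't⟩ := (hmem s').1 hs'
    obtain rfl | hij := eq_or_ne i j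
    · exact (hL i).disjoint_of_mem hsi hsj hss' (hst.trans hs't.symm)
    · exact hcross hij s hsi s' hsj (hst.trans hs't.symm)

end Assembly

theorem exists_coloring_of_not_reachable {H : SimpleGraph V} {a : Fin 3 → V}
    (ha : Pairwise fun i j => ¬H.Reachable (a i) (a j)) :
    ∃ g : Fin 3 → V → Fin 3, (∀ v, Function.Injective fun i => g i v) ∧
      (∀ i v, g i v = i ↔ H.Reachable v (a i)) ∧ ∀ i ⦃u v⦄, H.Adj u v → g i u = g i v := by
  obtain ⟨f, hf_inj, hf_fix⟩ :=
    exists_fin_three_coloring (c := fun i => H.connectedComponentMk (a i)) fun i j h =>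
      by_contra fun hij => ha hij (ConnectedComponent.eq.1 h)
  exact ⟨fun i v => f (H.connectedComponentMk v) i, fun v => hf_inj _,
    fun i v => (hf_fix _ _).trans ConnectedComponent.eq,
    fun i u v h => by simp only [ConnectedComponent.eq.2 h.reachable]⟩

theorem false_of_closed_crossing_detours {X : Set V} (hX : G.IsClique X) {a b : Fin 3 → V}
    (W : ∀ i, G.Walk (a i) (b i)) (hW : ∀ i, IsDetour G (W i))
    (hcross : ∀ i, PathCrosses G X (W i))
    (hclosed : ∀ i, a i ∉ X ∧ b i ∉ X ∧ (avoid G X).Reachable (a i) (b i))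
    (hhome : Pairwise fun i j => ¬(avoid G X).Reachable (a i) (a j))
    (hdisj : Pairwise fun i j => ∀ v ∈ X, ¬(v ∈ (W i).support ∧ v ∈ (W j).support)) :
    False := by
  classical
  obtain ⟨g, hg_inj, hg_home, hg_adj⟩ := exists_coloring_of_not_reachable hhome
  choose L hL using fun i => exists_isSegmentation (g i) X
    (fun u v h hu hv => hg_adj i ⟨h, hu, hv⟩) (W i) (hW i).1
  have hLcross : Pairwise fun i j => ∀ s ∈ L i, ∀ s' ∈ L j,
      s.color = s'.color → s.walk.support.Disjoint s'.walk.support :=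
    fun i j hij s hs s' hs' => (hL i).disjoint_of_color_eq (hL j)
      (fun v _ h => hij (hg_inj v h)) (hdisj hij) hs hs'
  have hends : ∀ i, ∃ first last, (L i).head? = some first ∧ (L i).getLast? = some last ∧
      first ≠ last ∧ first.color = i ∧ last.color = i := by
    intro i
    have ha : g i (a i) = i := (hg_home i _).2 .rfl
    have hb : g i (b i) = i := (hg_home i _).2 (hclosed i).2.2.symm
    obtain ⟨first, last, h₁, h₂, h₃, h₄, h₅⟩ := (hL i).exists_head_ne_getLast (hcross i)
      (hclosed i).1 fun v hv => (hg_home i v).1 (hv.trans ha)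
    exact ⟨first, last, h₁, h₂, h₃, h₄.trans ha, h₅.trans hb⟩
  choose u v N hN hlen using exists_isPath_length_eq_sum_color hX hL hLcross hends
  have hsum := (Finset.sum_fiberwise _ ColoredSegment.color _).trans
    (sum_support_length_biUnion hL hLcross)
  simp only [← hlen, Fin.sum_univ_three] at hsum
  have hWlen : ∀ i, (W i).length = (W 0).length :=
    fun i => le_antisymm ((hW 0).2 _ (hW i).1) ((hW i).2 _ (hW 0).1)
  have hNlen : ∀ t, (N t).length ≤ (W 0).length := fun t => (hW 0).2 _ (hN t)
  have hLlen : ∀ i, 2 ≤ (L i).length := fun i => by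
    obtain ⟨first, last, h₁, h₂, h₃, -⟩ := hends i
    rcases hLi : L i with _ | ⟨x, _ | ⟨y, rest⟩⟩ <;> simp_all
  linarith [hNlen 0, hNlen 1, hNlen 2, hLlen 0, hLlen 1, hLlen 2, hWlen 1, hWlen 2]

end SimpleGraph

open SimpleGraph

theorem no_three_closed_crossing_detours_general {V : Type*} (G : SimpleGraph V)
    (X : Set V) (hX : G.IsClique X)
    {p₁ p₂ q₁ q₂ r₁ r₂ : V}
    (P : G.Walk p₁ p₂) (Q : G.Walk q₁ q₂) (R : G.Walk r₁ r₂)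
    (hP : IsDetour G P) (hQ : IsDetour G Q) (hR : IsDetour G R)
    (hPc : PathCrosses G X P) (hQc : PathCrosses G X Q) (hRc : PathCrosses G X R)
    -- each path is closed: both end vertices lie outside X, in the same component
    (hPcl : p₁ ∉ X ∧ p₂ ∉ X ∧ (avoid G X).Reachable p₁ p₂)
    (hQcl : q₁ ∉ X ∧ q₂ ∉ X ∧ (avoid G X).Reachable q₁ q₂)
    (hRcl : r₁ ∉ X ∧ r₂ ∉ X ∧ (avoid G X).Reachable r₁ r₂)
    -- the home components are pairwise distinct
    (hPQ : ¬(avoid G X).Reachable p₁ q₁)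
    (hPR : ¬(avoid G X).Reachable p₁ r₁)
    (hQR : ¬(avoid G X).Reachable q₁ r₁)
    -- the intersections with X are pairwise disjoint
    (dPQ : ∀ w ∈ X, ¬(w ∈ P.support ∧ w ∈ Q.support))
    (dPR : ∀ w ∈ X, ¬(w ∈ P.support ∧ w ∈ R.support))
    (dQR : ∀ w ∈ X, ¬(w ∈ Q.support ∧ w ∈ R.support)) :
    False := by
  let W : ∀ i, G.Walk (![p₁, q₁, r₁] i) (![p₂, q₂, r₂] i) :=
    Fin.cons P (Fin.cons Q (Fin.cons R finZeroElim))
  refine false_of_closed_crossing_detours hX W ?_ ?_ ?_ ?_ ?_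
  · intro i; fin_cases i; exacts [hP, hQ, hR]
  · intro i; fin_cases i; exacts [hPc, hQc, hRc]
  · intro i; fin_cases i; exacts [hPcl, hQcl, hRcl]
  · intro i j hij
    fin_cases i <;> fin_cases j <;> first | exact absurd rfl hij | skip
    exacts [hPQ, hPR, fun h => hPQ h.symm, hQR, fun h => hPR h.symm, fun h => hQR h.symm]
  · intro i j hij
    fin_cases i <;> fin_cases j <;> first | exact absurd rfl hij | skip
    exacts [dPQ, dPR, fun v hv h => dPQ v hv h.symm, dQR, fun v hv h => dPR v hv h.symm,
      fun v hv h => dQR v hv h.symm]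

/-- Three closed crossing longest paths with pairwise distinct home components and
pairwise disjoint intersections with a clique-cut `X` cannot exist. -/
theorem no_three_closed_crossing_detours {V : Type*} [Fintype V] (G : SimpleGraph V)
    (hconn : G.Connected) (hchord : IsChordal G)
    (X : Set V) (hX : G.IsClique X)
    (hcut : ∃ a b : V, a ∉ X ∧ b ∉ X ∧ ¬(avoid G X).Reachable a b)
    {p₁ p₂ q₁ q₂ r₁ r₂ : V}
    (P : G.Walk p₁ p₂) (Q : G.Walk q₁ q₂) (R : G.Walk r₁ r₂)
    (hP : IsDetour G P) (hQ : IsDetour G Q) (hR : IsDetour G R)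
    (hPc : PathCrosses G X P) (hQc : PathCrosses G X Q) (hRc : PathCrosses G X R)
    -- each path is closed: both end vertices lie outside X, in the same component
    (hPcl : p₁ ∉ X ∧ p₂ ∉ X ∧ (avoid G X).Reachable p₁ p₂)
    (hQcl : q₁ ∉ X ∧ q₂ ∉ X ∧ (avoid G X).Reachable q₁ q₂)
    (hRcl : r₁ ∉ X ∧ r₂ ∉ X ∧ (avoid G X).Reachable r₁ r₂)
    -- the home components are pairwise distinct
    (hPQ : ¬(avoid G X).Reachable p₁ q₁)
    (hPR : ¬(avoid G X).Reachable p₁ r₁)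
    (hQR : ¬(avoid G X).Reachable q₁ r₁)
    -- the intersections with X are pairwise disjoint
    (dPQ : ∀ w ∈ X, ¬(w ∈ P.support ∧ w ∈ Q.support))
    (dPR : ∀ w ∈ X, ¬(w ∈ P.support ∧ w ∈ R.support))
    (dQR : ∀ w ∈ X, ¬(w ∈ Q.support ∧ w ∈ R.support)) :
    False :=
  no_three_closed_crossing_detours_general G X hX P Q R hP hQ hR hPc hQc hRc hPcl hQcl hRcl hPQ hPR
    hQR dPQ dPR dQR
end
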